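/- arXiv:2506.20393 — 3 statements merged into one kernel-verified Lean document; each statement's English description precedes it below -/
import Mathlib

section
/- Let B = R_p(t,sigma,H,J) be a BR algebra of rank n > 1. Let p' be the upper-left (n-1)x(n-1) submatrix of p, let sigma' = (sigma_1,...,sigma_{n-1}), t' = (t_1,...,t_{n-1}), H' = (H_1,...,H_{n-1}), J' = (J_1,...,J_{n-1}), and let S = R_{p'}(t',sigma',H',J') be the corresponding rank n-1 BR algebra. Extend sigma_n to an automorphism of S by sigma_n(t_i) = p_{in} t_i for i < n, and set Hhat = H_n S and Jhat = J_n S, which are two-sided ideals of S. Then the rank-1 BR algebra S(t_n, sigma_n, Hhat, Jhat) is a Z^{n-1} x Z = Z^n-graded ring which is graded isomorphic to B. In particular, every BR algebra of rank n > 1 can be expressed as a BR algebra of rank 1 over a BR algebra of rank n-1. -/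
open scoped Pointwise TensorProduct

namespace BR

/-- The ordered product `t₁^{α₁} ⋯ tₙ^{αₙ}` in the group of units. -/
def tpow {A : Type*} [Monoid A] {n : ℕ} (t : Fin n → Aˣ) (α : Fin n → ℤ) : Aˣ :=
  ((List.finRange n).map fun i => t i ^ α i).prod

/-- `σ^α = σ₁^{α₁} ⋯ σₙ^{αₙ}` as an algebra automorphism. -/
def σpow {k R : Type*} [CommSemiring k] [Semiring R] [Algebra k R] {n : ℕ}
    (σ : Fin n → R ≃ₐ[k] R) (α : Fin n → ℤ) : R ≃ₐ[k] R :=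
  ((List.finRange n).map fun i => σ i ^ α i).prod

/-- The ideal `I_σ^{(m)}(H, J)`:  `J σ(J) ⋯ σ^{m-1}(J)` for `m > 0`, `R` for `m = 0`,
and `σ⁻¹(H) σ⁻²(H) ⋯ σ^{m}(H)` for `m < 0`. -/
noncomputable def seg {k R : Type*} [Field k] [Ring R] [Algebra k R]
    (σ : R ≃ₐ[k] R) (H J : Submodule k R) (m : ℤ) : Submodule k R :=
  if 0 < m then
    ((List.range m.toNat).map fun i => J.map (σ ^ (i : ℤ)).toLinearMap).prod
  else if m = 0 then ⊤
  else ((List.range (-m).toNat).map fun i => H.map (σ ^ (-((i : ℤ) + 1))).toLinearMap).prod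

/-- `I^{(α)} = I₁^{(α₁)} ⋯ Iₙ^{(αₙ)}`. -/
noncomputable def segVec {k R : Type*} [Field k] [Ring R] [Algebra k R] {n : ℕ}
    (σ : Fin n → R ≃ₐ[k] R) (H J : Fin n → Submodule k R) (α : Fin n → ℤ) :
    Submodule k R :=
  ((List.finRange n).map fun i => seg (σ i) (H i) (J i) (α i)).prod

/-- A Bell–Rogalski datum `(R, t, σ, p, H, J)`. -/
structure IsBRDatum {k R : Type*} [Field k] [Ring R] [Algebra k R] {n : ℕ}
    (σ : Fin n → R ≃ₐ[k] R) (p : Fin n → Fin n → kˣ)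
    (H J : Fin n → Submodule k R) : Prop where
  comm : ∀ i j, σ i * σ j = σ j * σ i
  antisym : ∀ i j, p i j = (p j i)⁻¹
  H_mul_left : ∀ i (r x : R), x ∈ H i → r * x ∈ H i
  H_mul_right : ∀ i (r x : R), x ∈ H i → x * r ∈ H i
  J_mul_left : ∀ i (r x : R), x ∈ J i → r * x ∈ J i
  J_mul_right : ∀ i (r x : R), x ∈ J i → x * r ∈ J i
  mapH : ∀ i j, i ≠ j → (H j).map (σ i).toLinearMap = H j
  mapJ : ∀ i j, i ≠ j → (J j).map (σ i).toLinearMap = J j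
  HH : ∀ i j, i ≠ j → H i * H j = H j * H i
  HJ : ∀ i j, i ≠ j → H i * J j = J j * H i
  JJ : ∀ i j, i ≠ j → J i * J j = J j * J i
  seg_ne_bot : ∀ i (m : ℤ), seg (σ i) (H i) (J i) m ≠ ⊥

/-- A realization of the iterated skew Laurent extension `R_p[t^{±1}; σ]`:
an algebra `A` containing `R`, with units `t i` satisfying the skew commutation
relations, which is a free left `R`-module with basis the monomials `t^α`. -/
structure SkewLaurent (k : Type*) [Field k] {R : Type*} [Ring R] [Algebra k R] {n : ℕ}
    (σ : Fin n → R ≃ₐ[k] R) (p : Fin n → Fin n → kˣ)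
    (A : Type*) [Ring A] [Algebra k A] where
  ι : R →ₐ[k] A
  t : Fin n → Aˣ
  rel_r : ∀ i (r : R), (t i : A) * ι r = ι (σ i r) * (t i : A)
  rel_t : ∀ i j, i ≠ j → (t j : A) * (t i : A) =
    algebraMap k A (p i j) * ((t i : A) * (t j : A))
  repr_exists : ∀ a : A, ∃ c : (Fin n → ℤ) →₀ R,
    a = c.sum fun α r => ι r * (tpow t α : A)
  repr_free : ∀ c : (Fin n → ℤ) →₀ R,
    (c.sum fun α r => ι r * (tpow t α : A)) = 0 → c = 0

/-- The graded component `B_α = I^{(α)} t^α` of the Bell–Rogalski algebra, as a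
`k`-subspace of the ambient skew Laurent extension. -/
noncomputable def brComponent {k R : Type*} [Field k] [Ring R] [Algebra k R] {n : ℕ}
    {σ : Fin n → R ≃ₐ[k] R} {p : Fin n → Fin n → kˣ}
    {A : Type*} [Ring A] [Algebra k A]
    (E : SkewLaurent k σ p A) (H J : Fin n → Submodule k R) (α : Fin n → ℤ) :
    Submodule k A :=
  ((segVec σ H J α).map E.ι.toLinearMap).map (LinearMap.mulRight k ((tpow E.t α : Aˣ) : A))

/-- The Bell–Rogalski algebra `B = ⊕_α I^{(α)} t^α` as a `k`-subspace of the
ambient skew Laurent extension. -/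
noncomputable def brSubmodule {k R : Type*} [Field k] [Ring R] [Algebra k R] {n : ℕ}
    {σ : Fin n → R ≃ₐ[k] R} {p : Fin n → Fin n → kˣ}
    {A : Type*} [Ring A] [Algebra k A]
    (E : SkewLaurent k σ p A) (H J : Fin n → Submodule k R) : Submodule k A :=
  ⨆ α : Fin n → ℤ, brComponent E H J α

/-- The weight space `M_𝔪 = {v ∈ M ∣ 𝔪 ⬝ v = 0}` of a module over an algebra `B`
receiving a map from `R`. -/
def weightSpace {k R B : Type*} [Field k] [CommRing R] [Algebra k R]
    [Ring B] [Algebra k B] (ιB : R →ₐ[k] B)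
    (M : Type*) [AddCommGroup M] [Module B M] (m : Ideal R) : AddSubgroup M where
  carrier := {v | ∀ r ∈ m, ιB r • v = 0}
  zero_mem' := by intro r hr; simp
  add_mem' := by intro a b ha hb r hr; rw [smul_add, ha r hr, hb r hr, add_zero]
  neg_mem' := by intro a ha r hr; rw [smul_neg, ha r hr, neg_zero]

/-- `M` is a weight module: the direct sum of its weight spaces over maximal ideals. -/
def IsWeightModule {k R B : Type*} [Field k] [CommRing R] [Algebra k R]
    [Ring B] [Algebra k B] (ιB : R →ₐ[k] B)
    (M : Type*) [AddCommGroup M] [Module B M] : Prop :=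
  (⨆ m : MaximalSpectrum R, weightSpace ιB M m.asIdeal) = ⊤ ∧
    iSupIndep fun m : MaximalSpectrum R => weightSpace ιB M m.asIdeal

/-- A bundled simple weight module over `B`. -/
structure SimpleWeightWitness.{w, uk, uR, uB} (k : Type uk) [Field k] {R : Type uR}
    [CommRing R] [Algebra k R]
    (B : Type uB) [Ring B] [Algebra k B] (ιB : R →ₐ[k] B) where
  M : Type w
  [acg : AddCommGroup M]
  [mod : Module B M]
  simple : IsSimpleModule B M
  weight : IsWeightModule ιB M

attribute [instance] SimpleWeightWitness.acg SimpleWeightWitness.mod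

/-- The support of a bundled weight module. -/
def SimpleWeightWitness.supp {k : Type*} [Field k] {R : Type*} [CommRing R] [Algebra k R]
    {B : Type*} [Ring B] [Algebra k B] {ιB : R →ₐ[k] B}
    (W : SimpleWeightWitness k B ιB) : Set (MaximalSpectrum R) :=
  {m' | weightSpace ιB W.M m'.asIdeal ≠ ⊥}

/-- Isomorphism of bundled weight modules, as `B`-modules. -/
def SimpleWeightWitness.Iso {k : Type*} [Field k] {R : Type*} [CommRing R] [Algebra k R]
    {B : Type*} [Ring B] [Algebra k B] {ιB : R →ₐ[k] B}
    (W : SimpleWeightWitness k B ιB) (W' : SimpleWeightWitness k B ιB) : Prop :=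
  Nonempty (W.M ≃ₗ[B] W'.M)

/-- Gelfand–Kirillov dimension of a `k`-algebra. -/
noncomputable def GKdim (k A : Type*) [Field k] [Ring A] [Algebra k A] : ENNReal :=
  ⨆ S : Finset A, Filter.limsup
    (fun n : ℕ => ENNReal.ofReal (Real.logb n
      (Module.finrank k ↥((Submodule.span k (insert (1 : A) (S : Set A))) ^ n))))
    Filter.atTop

/-- An automorphism is locally algebraic if every orbit is contained in a
finite-dimensional subspace. -/
def LocallyAlgebraic {k R : Type*} [Field k] [Ring R] [Algebra k R]
    (σ : R ≃ₐ[k] R) : Prop :=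
  ∀ r : R, ∃ V : Submodule k R, FiniteDimensional k ↥V ∧ ∀ m : ℕ, (σ ^ m) r ∈ V

/-- The defining relations of a twisted generalized Weyl algebra of type `(A₁)ⁿ`. -/
def TGWARels (k : Type*) [Field k] {R : Type*} [Ring R] [Algebra k R] {n : ℕ}
    (σ : Fin n → R ≃ₐ[k] R) (a : Fin n → R) (γ μ : Fin n → Fin n → kˣ)
    {T : Type*} [Ring T] [Algebra k T]
    (ι : R →ₐ[k] T) (Xp Xm : Fin n → T) : Prop :=
  (∀ i (r : R), Xp i * ι r = ι (σ i r) * Xp i) ∧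
  (∀ i (r : R), Xm i * ι r = ι ((σ i)⁻¹ r) * Xm i) ∧
  (∀ i, Xm i * Xp i = ι (a i)) ∧
  (∀ i, Xp i * Xm i = ι (σ i (a i))) ∧
  (∀ i j, i ≠ j → Xp i * Xm j = ((μ i j : kˣ) : k) • (Xm j * Xp i)) ∧
  (∀ i j, i ≠ j → Xp i * Xp j = ((γ i j * (μ i j)⁻¹ : kˣ) : k) • (Xp j * Xp i)) ∧
  (∀ i j, i ≠ j → Xm j * Xm i = ((γ i j * (μ j i)⁻¹ : kˣ) : k) • (Xm i * Xm j))

/-- A realization of the twisted generalized Weyl algebra `A_μ(R, σ, a)` of type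
`(A₁)ⁿ`: it satisfies the defining relations, is `ℤⁿ`-graded with `deg Xᵢ± = ±eᵢ`,
and is universal with respect to the relations. -/
structure TGWA (k : Type*) [Field k] {R : Type*} [Ring R] [Algebra k R] {n : ℕ}
    (σ : Fin n → R ≃ₐ[k] R) (a : Fin n → R) (γ μ : Fin n → Fin n → kˣ)
    (T : Type*) [Ring T] [Algebra k T] where
  ι : R →ₐ[k] T
  Xp : Fin n → T
  Xm : Fin n → T
  rels : TGWARels k σ a γ μ ι Xp Xm
  grading : (Fin n → ℤ) → Submodule k T
  grading_internal : DirectSum.IsInternal grading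
  grading_mul : ∀ (α β : Fin n → ℤ) (x y : T),
    x ∈ grading α → y ∈ grading β → x * y ∈ grading (α + β)
  ι_mem : ∀ r, ι r ∈ grading 0
  Xp_mem : ∀ i, Xp i ∈ grading (Pi.single i 1)
  Xm_mem : ∀ i, Xm i ∈ grading (-Pi.single i 1)
  free : ∀ {C : Type} [Ring C] [Algebra k C] (ιC : R →ₐ[k] C) (Yp Ym : Fin n → C),
    TGWARels k σ a γ μ ιC Yp Ym →
    ∃! f : T →ₐ[k] C, f.comp ι = ιC ∧ (∀ i, f (Xp i) = Yp i) ∧ (∀ i, f (Xm i) = Ym i)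


section A1


variable {k : Type*} [Field k] {A : Type*} [Ring A] [Algebra k A]

lemma map_mulRight_eq (P : Submodule k A) (u : A) :
    P.map (LinearMap.mulRight k u) = P * Submodule.span k {u} := by
  apply le_antisymm
  · rintro _ ⟨x, hx, rfl⟩
    exact Submodule.mul_mem_mul hx (Submodule.mem_span_singleton_self u)
  · refine Submodule.mul_le.mpr fun x hx y hy => ?_
    rcases Submodule.mem_span_singleton.mp hy with ⟨c, rfl⟩
    rw [mul_smul_comm]
    exact Submodule.smul_mem _ _ ⟨x, hx, rfl⟩

lemma span_mul_span_singleton (u v : A) :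
    Submodule.span k {u} * Submodule.span k {v} = Submodule.span k {u * v} := by
  rw [Submodule.span_mul_span, Set.singleton_mul_singleton]

/-- Two-sided ideal predicate for `k`-submodules. -/
def IsTwoSided (N : Submodule k A) : Prop :=
  (∀ r x : A, x ∈ N → r * x ∈ N) ∧ (∀ r x : A, x ∈ N → x * r ∈ N)

lemma isTwoSided_top : IsTwoSided (⊤ : Submodule k A) :=
  ⟨fun _ _ _ => trivial, fun _ _ _ => trivial⟩

lemma IsTwoSided.mul {M N : Submodule k A} (hM : IsTwoSided M) (hN : IsTwoSided N) :
    IsTwoSided (M * N) := by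
  constructor
  · intro r x hx
    refine Submodule.mul_induction_on hx (fun a ha b hb => ?_) (fun a b ha hb => ?_)
    · rw [← mul_assoc]; exact Submodule.mul_mem_mul (hM.1 r a ha) hb
    · rw [mul_add]; exact add_mem ha hb
  · intro r x hx
    refine Submodule.mul_induction_on hx (fun a ha b hb => ?_) (fun a b ha hb => ?_)
    · rw [mul_assoc]; exact Submodule.mul_mem_mul ha (hN.2 r b hb)
    · rw [add_mul]; exact add_mem ha hb

lemma IsTwoSided.top_mul {N : Submodule k A} (hN : IsTwoSided N) : ⊤ * N = N := by
  apply le_antisymm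
  · exact Submodule.mul_le.mpr fun x _ y hy => hN.1 x y hy
  · intro x hx
    have := Submodule.mul_mem_mul (M := (⊤ : Submodule k A)) (Submodule.mem_top (x := (1:A))) hx
    rwa [one_mul] at this

lemma IsTwoSided.mul_top {N : Submodule k A} (hN : IsTwoSided N) : N * ⊤ = N := by
  apply le_antisymm
  · exact Submodule.mul_le.mpr fun x hx y _ => hN.2 y x hx
  · intro x hx
    have := Submodule.mul_mem_mul hx (Submodule.mem_top (x := (1 : A)))
    rwa [mul_one] at this

lemma isTwoSided_listProd : ∀ (l : List (Submodule k A)), l ≠ [] →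
    (∀ N ∈ l, IsTwoSided N) → IsTwoSided l.prod
  | [], h, _ => absurd rfl h
  | [x], _, h => by
      rw [List.prod_cons, List.prod_nil, mul_one]
      exact h x (List.mem_cons_self)
  | x :: y :: ys, _, h => by
      rw [List.prod_cons]
      exact (h x (List.mem_cons_self)).mul
        (isTwoSided_listProd (y :: ys) (by simp) fun N hN => h N (List.mem_cons_of_mem _ hN))

lemma listProd_comm {l : List (Submodule k A)} {N : Submodule k A}
    (h : ∀ M ∈ l, M * N = N * M) : l.prod * N = N * l.prod := by
  induction l with
  | nil => rw [List.prod_nil, one_mul, mul_one]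
  | cons x xs ih =>
    rw [List.prod_cons, mul_assoc, ih fun M hM => h M (List.mem_cons_of_mem _ hM),
      ← mul_assoc, h x (List.mem_cons_self), mul_assoc]

lemma one_le_listProd {l : List (Submodule k A)} (h : ∀ M ∈ l, M = ⊤) :
    (1 : Submodule k A) ≤ l.prod := by
  induction l with
  | nil => exact le_rfl
  | cons x xs ih =>
    rw [List.prod_cons]
    calc (1 : Submodule k A) = 1 * 1 := (one_mul 1).symm
    _ ≤ x * xs.prod := mul_le_mul'
        (by rw [h x (List.mem_cons_self)]; exact le_top)
        (ih fun M hM => h M (List.mem_cons_of_mem _ hM))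




end A1

section A2

variable {k : Type*} [Field k] {R : Type*} [Ring R] [Algebra k R]

lemma map_aut_mul (e f : R ≃ₐ[k] R) (N : Submodule k R) :
    N.map (e * f).toLinearMap = (N.map f.toLinearMap).map e.toLinearMap := by
  rw [← Submodule.map_comp]
  rfl

lemma map_aut_one (N : Submodule k R) :
    N.map (1 : R ≃ₐ[k] R).toLinearMap = N := by
  ext x
  constructor
  · rintro ⟨y, hy, rfl⟩; exact hy
  · intro hx; exact ⟨x, hx, rfl⟩

lemma map_mul_eq (g : R ≃ₐ[k] R) (X Y : Submodule k R) :
    (X * Y).map g.toLinearMap = X.map g.toLinearMap * Y.map g.toLinearMap := by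
  have := Submodule.map_mul X Y g.toAlgHom
  simpa using this

lemma map_fix_inv {e : R ≃ₐ[k] R} {N : Submodule k R} (h : N.map e.toLinearMap = N) :
    N.map (e⁻¹).toLinearMap = N := by
  conv_lhs => rw [← h, ← map_aut_mul]
  rw [inv_mul_cancel, map_aut_one]

lemma map_fix_pow {e : R ≃ₐ[k] R} {N : Submodule k R} (h : N.map e.toLinearMap = N) (c : ℕ) :
    N.map (e ^ c).toLinearMap = N := by
  induction c with
  | zero => rw [pow_zero, map_aut_one]
  | succ c ih => rw [pow_succ, map_aut_mul, h, ih]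

lemma map_fix_zpow {e : R ≃ₐ[k] R} {N : Submodule k R} (h : N.map e.toLinearMap = N) (s : ℤ) :
    N.map (e ^ s).toLinearMap = N := by
  cases s with
  | ofNat c => rw [Int.ofNat_eq_coe, zpow_natCast]; exact map_fix_pow h c
  | negSucc c => rw [zpow_negSucc]; exact map_fix_inv (map_fix_pow h (c + 1))

lemma translate_comm {e f : R ≃ₐ[k] R} {X Y : Submodule k R}
    (hef : e * f = f * e) (hXY : X * Y = Y * X)
    (hfX : X.map f.toLinearMap = X) (heY : Y.map e.toLinearMap = Y) (s u : ℤ) :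
    X.map (e ^ s).toLinearMap * Y.map (f ^ u).toLinearMap
      = Y.map (f ^ u).toLinearMap * X.map (e ^ s).toLinearMap := by
  have hc : e ^ s * f ^ u = f ^ u * e ^ s := (Commute.zpow_zpow hef s u)
  have hgX : X.map (e ^ s * f ^ u).toLinearMap = X.map (e ^ s).toLinearMap := by
    rw [map_aut_mul, map_fix_zpow hfX]
  have hgY : Y.map (e ^ s * f ^ u).toLinearMap = Y.map (f ^ u).toLinearMap := by
    rw [hc, map_aut_mul, map_fix_zpow heY]
  calc X.map (e ^ s).toLinearMap * Y.map (f ^ u).toLinearMap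
      = (X * Y).map (e ^ s * f ^ u).toLinearMap := by rw [map_mul_eq, hgX, hgY]
    _ = (Y * X).map (e ^ s * f ^ u).toLinearMap := by rw [hXY]
    _ = Y.map (f ^ u).toLinearMap * X.map (e ^ s).toLinearMap := by
        rw [map_mul_eq, hgX, hgY]

lemma IsTwoSided.mapAut {N : Submodule k R} (hN : IsTwoSided N) (e : R ≃ₐ[k] R) :
    IsTwoSided (N.map e.toLinearMap) := by
  constructor
  · rintro r _ ⟨y, hy, rfl⟩
    refine ⟨e.symm r * y, hN.1 _ _ hy, ?_⟩
    show e _ = _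
    rw [map_mul, AlgEquiv.apply_symm_apply]
    rfl
  · rintro r _ ⟨y, hy, rfl⟩
    refine ⟨y * e.symm r, hN.2 _ _ hy, ?_⟩
    show e _ = _
    rw [map_mul, AlgEquiv.apply_symm_apply]
    rfl


end A2

section A3

variable {k : Type*} [Field k] {A : Type*} [Ring A] [Algebra k A]
  {R' : Type*} [Ring R'] [Algebra k R']

/-- `u` implements `τ` on the image of `ι`. -/
def SkewPair (ι : R' →ₐ[k] A) (u : Aˣ) (τ : R' ≃ₐ[k] R') : Prop :=
  ∀ r : R', (u : A) * ι r = ι (τ r) * u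

namespace SkewPair

variable {ι : R' →ₐ[k] A} {u v : Aˣ} {τ ρ : R' ≃ₐ[k] R'}

lemma one (ι : R' →ₐ[k] A) : SkewPair ι 1 1 := fun r => by simp

lemma mul (hu : SkewPair ι u τ) (hv : SkewPair ι v ρ) : SkewPair ι (u * v) (τ * ρ) := by
  intro r
  calc ((u * v : Aˣ) : A) * ι r = (u : A) * ((v : A) * ι r) := by
        rw [Units.val_mul, mul_assoc]
    _ = (u : A) * (ι (ρ r) * v) := by rw [hv]
    _ = ((u : A) * ι (ρ r)) * v := by rw [mul_assoc]
    _ = (ι (τ (ρ r)) * u) * v := by rw [hu]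
    _ = ι ((τ * ρ) r) * ((u * v : Aˣ) : A) := by
        rw [AlgEquiv.mul_apply, Units.val_mul, mul_assoc]

lemma inv (h : SkewPair ι u τ) : SkewPair ι u⁻¹ τ⁻¹ := by
  intro r
  have h2 : ι r * (u : A) = (u : A) * ι (τ⁻¹ r) := by
    rw [h (τ⁻¹ r)]
    congr 1
    exact congrArg ι (AlgEquiv.apply_symm_apply τ r).symm
  rw [Units.inv_mul_eq_iff_eq_mul, ← mul_assoc, ← h2, Units.mul_inv_cancel_right]

lemma pow (h : SkewPair ι u τ) (c : ℕ) : SkewPair ι (u ^ c) (τ ^ c) := by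
  induction c with
  | zero => rw [pow_zero, pow_zero]; exact one ι
  | succ c ih =>
    rw [pow_succ, pow_succ]
    exact ih.mul h

lemma zpow (h : SkewPair ι u τ) (s : ℤ) : SkewPair ι (u ^ s) (τ ^ s) := by
  cases s with
  | ofNat c => rw [Int.ofNat_eq_coe, zpow_natCast, zpow_natCast]; exact h.pow c
  | negSucc c => rw [zpow_negSucc, zpow_negSucc]; exact (h.pow (c + 1)).inv

lemma listProd {n : ℕ} {f : Fin n → Aˣ} {g : Fin n → R' ≃ₐ[k] R'}
    (h : ∀ i, SkewPair ι (f i) (g i)) (l : List (Fin n)) :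
    SkewPair ι ((l.map f).prod) ((l.map g).prod) := by
  induction l with
  | nil => simpa using one ι
  | cons x xs ih =>
    rw [List.map_cons, List.map_cons, List.prod_cons, List.prod_cons]
    exact (h x).mul ih

lemma span_mul (h : SkewPair ι u τ) (N : Submodule k R') :
    Submodule.span k {(u : A)} * N.map ι.toLinearMap
      = (N.map τ.toLinearMap).map ι.toLinearMap * Submodule.span k {(u : A)} := by
  apply le_antisymm
  · refine Submodule.mul_le.mpr fun x hx y hy => ?_
    rcases Submodule.mem_span_singleton.mp hx with ⟨c, rfl⟩
    rcases hy with ⟨r, hr, rfl⟩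
    have : (c • (u : A)) * ι r = c • (ι (τ r) * u) := by rw [smul_mul_assoc, h r]
    rw [show ι.toLinearMap r = ι r from rfl, this]
    exact Submodule.smul_mem _ _
      (Submodule.mul_mem_mul ⟨τ r, ⟨r, hr, rfl⟩, rfl⟩ (Submodule.mem_span_singleton_self _))
  · refine Submodule.mul_le.mpr fun x hx y hy => ?_
    rcases hx with ⟨r', ⟨r, hr, rfl⟩, rfl⟩
    rcases Submodule.mem_span_singleton.mp hy with ⟨c, rfl⟩
    have : (ι.toLinearMap (τ.toLinearMap r)) * (c • (u : A)) = c • ((u : A) * ι r) := by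
      rw [mul_smul_comm]
      congr 1
      exact (h r).symm
    rw [this]
    exact Submodule.smul_mem _ _
      (Submodule.mul_mem_mul (Submodule.mem_span_singleton_self _) ⟨r, hr, rfl⟩)

lemma map_conj (h : SkewPair ι u τ) (N : Submodule k R') :
    (N.map τ.toLinearMap).map ι.toLinearMap
      = Submodule.span k {(u : A)} * (N.map ι.toLinearMap)
          * Submodule.span k {((u⁻¹ : Aˣ) : A)} := by
  rw [h.span_mul, mul_assoc, Submodule.span_mul_span, Set.singleton_mul_singleton,
    Units.mul_inv, ← Submodule.one_eq_span, mul_one]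

end SkewPair


end A3

section D
variable {k : Type*} [Field k] {R : Type*} [Ring R] [Algebra k R]

lemma seg_zero (σ : R ≃ₐ[k] R) (H J : Submodule k R) : seg σ H J 0 = ⊤ := by
  simp [seg]

lemma seg_pos (σ : R ≃ₐ[k] R) (H J : Submodule k R) {ℓ : ℤ} (hl : 0 < ℓ) :
    seg σ H J ℓ =
      ((List.range ℓ.toNat).map fun i => J.map (σ ^ (i : ℤ)).toLinearMap).prod := by
  simp [seg, hl]

lemma seg_neg (σ : R ≃ₐ[k] R) (H J : Submodule k R) {ℓ : ℤ} (hl : ℓ < 0) :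
    seg σ H J ℓ =
      ((List.range (-ℓ).toNat).map fun i => H.map (σ ^ (-((i : ℤ) + 1))).toLinearMap).prod := by
  rw [seg, if_neg (by omega), if_neg (by omega)]

lemma seg_isTwoSided {σ : R ≃ₐ[k] R} {H J : Submodule k R}
    (hH : IsTwoSided H) (hJ : IsTwoSided J) (ℓ : ℤ) : IsTwoSided (seg σ H J ℓ) := by
  rcases lt_trichotomy ℓ 0 with hl | rfl | hl
  · rw [seg_neg σ H J hl]
    refine isTwoSided_listProd _ ?_ ?_
    · intro hcon
      have h2 : (-ℓ).toNat = 0 := by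
        have h3 := congrArg List.length hcon
        simpa only [bind_pure_comp, List.length_map, List.map_eq_map, List.length_range,
          List.length_nil] using h3
      omega
    intro N hN
    rcases List.mem_map.mp hN with ⟨c, _, rfl⟩
    exact hH.mapAut _
  · rw [seg_zero]; exact isTwoSided_top
  · rw [seg_pos σ H J hl]
    refine isTwoSided_listProd _ ?_ ?_
    · intro hcon
      have h2 : ℓ.toNat = 0 := by
        have h3 := congrArg List.length hcon
        simpa only [bind_pure_comp, List.length_map, List.map_eq_map, List.length_range,
          List.length_nil] using h3
      omega
    intro N hN
    rcases List.mem_map.mp hN with ⟨c, _, rfl⟩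
    exact hJ.mapAut _

/-- Commutation of a `seg` with a translate of a two-sided ideal commuting with its data. -/
lemma seg_comm_translate {σ τ : R ≃ₐ[k] R} {H J X : Submodule k R}
    (hστ : σ * τ = τ * σ) (hX : IsTwoSided X)
    (hHX : H * X = X * H) (hJX : J * X = X * J)
    (hτH : H.map τ.toLinearMap = H) (hτJ : J.map τ.toLinearMap = J)
    (hσX : X.map σ.toLinearMap = X) (u ℓ : ℤ) :
    seg σ H J ℓ * X.map (τ ^ u).toLinearMap = X.map (τ ^ u).toLinearMap * seg σ H J ℓ := by
  rcases lt_trichotomy ℓ 0 with hl | rfl | hl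
  · rw [seg_neg σ H J hl]
    refine listProd_comm ?_
    intro M hM
    rcases List.mem_map.mp hM with ⟨c, _, rfl⟩
    exact translate_comm hστ hHX hτH hσX _ u
  · rw [seg_zero]
    exact ((hX.mapAut (τ ^ u)).top_mul).trans ((hX.mapAut (τ ^ u)).mul_top).symm
  · rw [seg_pos σ H J hl]
    refine listProd_comm ?_
    intro M hM
    rcases List.mem_map.mp hM with ⟨c, _, rfl⟩
    exact translate_comm hστ hJX hτJ hσX _ u

end D

section E
variable {k : Type*} [Field k] {R : Type*} [Ring R] [Algebra k R]

lemma seg_pos_eq (σ : R ≃ₐ[k] R) (H J : Submodule k R) {ℓ : ℤ} (hl : 0 < ℓ) :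
    seg σ H J ℓ =
      ((List.range ℓ.toNat).map fun i : ℕ => J.map (σ ^ (i : ℤ)).toLinearMap).prod := by
  rw [seg_pos σ H J hl]
  congr 1
  simp only [bind_pure_comp, List.map_eq_map, List.map_map]
  rfl

lemma seg_neg_eq (σ : R ≃ₐ[k] R) (H J : Submodule k R) {ℓ : ℤ} (hl : ℓ < 0) :
    seg σ H J ℓ =
      ((List.range (-ℓ).toNat).map fun i : ℕ =>
        H.map (σ ^ (-((i : ℤ) + 1))).toLinearMap).prod := by
  rw [seg_neg σ H J hl]
  congr 1
  simp only [bind_pure_comp, List.map_eq_map, List.map_map]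
  rfl

variable {A : Type*} [Monoid A]

lemma finRange_succ_eq (n : ℕ) :
    List.finRange (n + 1) = ((List.finRange n).map Fin.castSucc) ++ [Fin.last n] := by
  rw [← List.ofFn_id, List.ofFn_succ', ← List.ofFn_id, List.map_ofFn]
  simp [List.concat_eq_append, Function.comp]

lemma tpow_snoc {m : ℕ} (t : Fin (m + 1) → Aˣ) (α : Fin m → ℤ) (ℓ : ℤ) :
    tpow t (Fin.snoc α ℓ) =
      (((List.finRange m).map fun i => t i.castSucc ^ α i).prod) * t (Fin.last m) ^ ℓ := by
  unfold tpow
  rw [finRange_succ_eq, List.map_append, List.prod_append, List.map_map]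
  simp only [List.map_cons, List.map_nil, List.prod_cons, List.prod_nil, mul_one]
  congr 2
  · congr 1
    funext i
    simp [Function.comp, Fin.snoc_castSucc]
  · simp [Fin.snoc_last]

lemma tpow_zero {n : ℕ} (t : Fin n → Aˣ) : tpow t 0 = 1 := by
  unfold tpow
  rw [List.prod_eq_one]
  intro x hx
  rcases List.mem_map.mp hx with ⟨i, _, rfl⟩
  exact zpow_zero _

lemma snoc_zero_zero {m : ℕ} : (Fin.snoc (0 : Fin m → ℤ) (0 : ℤ)) = (0 : Fin (m+1) → ℤ) := by
  funext i
  refine Fin.lastCases ?_ ?_ i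
  · simp [Fin.snoc_last]
  · intro j; simp [Fin.snoc_castSucc]

end E

section F
variable {k : Type*} [Field k] {R : Type*} [Ring R] [Algebra k R] {m : ℕ}
  {σ : Fin (m + 1) → R ≃ₐ[k] R} {H J : Fin (m + 1) → Submodule k R}

lemma segVec_snoc (σ : Fin (m + 1) → R ≃ₐ[k] R) (H J : Fin (m + 1) → Submodule k R)
    (α : Fin m → ℤ) (ℓ : ℤ) :
    segVec σ H J (Fin.snoc α ℓ) =
      (((List.finRange m).map fun i =>
        seg (σ i.castSucc) (H i.castSucc) (J i.castSucc) (α i)).prod)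
        * seg (σ (Fin.last m)) (H (Fin.last m)) (J (Fin.last m)) ℓ := by
  unfold segVec
  rw [finRange_succ_eq, List.map_append, List.prod_append, List.map_map]
  simp only [List.map_cons, List.map_nil, List.prod_cons, List.prod_nil, mul_one]
  congr 2
  · congr 1
    funext i
    simp [Function.comp, Fin.snoc_castSucc]
  · simp [Fin.snoc_last]

end F

section G
variable {k : Type*} [Field k] {R : Type*} [Ring R] [Algebra k R] {m : ℕ}
  {σ : Fin (m + 1) → R ≃ₐ[k] R} {p : Fin (m + 1) → Fin (m + 1) → kˣ}
  {H J : Fin (m + 1) → Submodule k R}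

lemma map_aut_comm {e f : R ≃ₐ[k] R} (h : e * f = f * e) (N : Submodule k R) :
    (N.map f.toLinearMap).map e.toLinearMap = (N.map e.toLinearMap).map f.toLinearMap := by
  rw [← map_aut_mul, h, map_aut_mul]

lemma listProd_top : ∀ (l : List (Submodule k R)), l ≠ [] →
    (∀ N ∈ l, N = ⊤) → l.prod = ⊤
  | [], h, _ => absurd rfl h
  | [x], _, h => by
      rw [List.prod_cons, List.prod_nil, mul_one]
      exact h x (List.mem_cons_self)
  | x :: y :: ys, _, h => by
      rw [List.prod_cons, h x (List.mem_cons_self),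
        listProd_top (y :: ys) (by simp) fun N hN => h N (List.mem_cons_of_mem _ hN)]
      exact isTwoSided_top.mul_top

lemma finRange_ne_nil (n : ℕ) : List.finRange (n + 1) ≠ [] := by
  intro h
  have := congrArg List.length h
  simp at this

variable (hD : IsBRDatum σ p H J)
include hD

lemma isTwoSided_H (i : Fin (m + 1)) : IsTwoSided (H i) :=
  ⟨hD.H_mul_left i, hD.H_mul_right i⟩

lemma isTwoSided_J (i : Fin (m + 1)) : IsTwoSided (J i) :=
  ⟨hD.J_mul_left i, hD.J_mul_right i⟩

lemma fix_translate {i j : Fin (m + 1)} (hij : i ≠ j) {Y : Submodule k R}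
    (hY : Y = H j ∨ Y = J j) (u : ℤ) :
    (Y.map ((σ j) ^ u).toLinearMap).map (σ i).toLinearMap
      = Y.map ((σ j) ^ u).toLinearMap := by
  have hcomm : (σ i) * ((σ j) ^ u) = ((σ j) ^ u) * (σ i) :=
    Commute.zpow_right (hD.comm i j) u
  rw [map_aut_comm hcomm]
  congr 1
  rcases hY with rfl | rfl
  exacts [hD.mapH i j hij, hD.mapJ i j hij]

lemma segVec_isTwoSided (β : Fin (m + 1) → ℤ) : IsTwoSided (segVec σ H J β) := by
  refine isTwoSided_listProd _ ?_ ?_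
  · intro h
    have := congrArg List.length h
    simp at this
  · intro N hN
    rcases List.mem_map.mp hN with ⟨i, _, rfl⟩
    exact seg_isTwoSided (isTwoSided_H hD i) (isTwoSided_J hD i) _

lemma segVec_comm_translate {j : Fin (m + 1)} {Y : Submodule k R}
    (hY : Y = H j ∨ Y = J j) (u : ℤ) {β : Fin (m + 1) → ℤ} (hβ : β j = 0) :
    segVec σ H J β * Y.map ((σ j) ^ u).toLinearMap
      = Y.map ((σ j) ^ u).toLinearMap * segVec σ H J β := by
  have hYts : IsTwoSided Y := by
    rcases hY with rfl | rfl
    exacts [isTwoSided_H hD j, isTwoSided_J hD j]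
  refine listProd_comm ?_
  intro M hM
  rcases List.mem_map.mp hM with ⟨i, _, rfl⟩
  by_cases hij : i = j
  · subst hij
    rw [hβ, seg_zero]
    exact ((hYts.mapAut _).top_mul).trans ((hYts.mapAut _).mul_top).symm
  · refine seg_comm_translate (hD.comm i j) hYts ?_ ?_ ?_ ?_ ?_ u (β i)
    · rcases hY with rfl | rfl
      exacts [hD.HH i j hij, hD.HJ i j hij]
    · rcases hY with rfl | rfl
      exacts [(hD.HJ j i (Ne.symm hij)).symm, hD.JJ i j hij]
    · exact hD.mapH j i (Ne.symm hij)
    · exact hD.mapJ j i (Ne.symm hij)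
    · rcases hY with rfl | rfl
      exacts [hD.mapH i j hij, hD.mapJ i j hij]

lemma segVec_comm_seg {β : Fin (m + 1) → ℤ} (hβ : β (Fin.last m) = 0) (ℓ : ℤ) :
    segVec σ H J β * seg (σ (Fin.last m)) (H (Fin.last m)) (J (Fin.last m)) ℓ
      = seg (σ (Fin.last m)) (H (Fin.last m)) (J (Fin.last m)) ℓ * segVec σ H J β := by
  rcases lt_trichotomy ℓ 0 with hl | rfl | hl
  · rw [seg_neg_eq _ _ _ hl]
    refine (listProd_comm ?_).symm
    intro M hM
    rcases List.mem_map.mp hM with ⟨c, _, rfl⟩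
    exact (segVec_comm_translate hD (Or.inl rfl) _ hβ).symm
  · rw [seg_zero]
    exact ((segVec_isTwoSided hD β).mul_top).trans ((segVec_isTwoSided hD β).top_mul).symm
  · rw [seg_pos_eq _ _ _ hl]
    refine (listProd_comm ?_).symm
    intro M hM
    rcases List.mem_map.mp hM with ⟨c, _, rfl⟩
    exact (segVec_comm_translate hD (Or.inr rfl) _ hβ).symm

lemma segVec_snoc_full (α : Fin m → ℤ) (ℓ : ℤ) :
    segVec σ H J (Fin.snoc α ℓ) = segVec σ H J (Fin.snoc α 0)
      * seg (σ (Fin.last m)) (H (Fin.last m)) (J (Fin.last m)) ℓ := by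
  rw [segVec_snoc, segVec_snoc, seg_zero, mul_assoc,
    (seg_isTwoSided (isTwoSided_H hD _) (isTwoSided_J hD _) ℓ).top_mul]

omit hD in
lemma segVec_zero_eq_top : segVec σ H J (Fin.snoc (0 : Fin m → ℤ) (0 : ℤ)) = ⊤ := by
  rw [snoc_zero_zero]
  refine listProd_top _ ?_ ?_
  · intro h
    have := congrArg List.length h
    simp at this
  · intro N hN
    rcases List.mem_map.mp hN with ⟨i, _, rfl⟩
    exact seg_zero _ _ _

end G

section Hh
variable {k : Type*} [Field k] {R A : Type*} [Ring R] [Algebra k R] [Ring A] [Algebra k A]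
  {m : ℕ} {σ : Fin (m + 1) → R ≃ₐ[k] R} {p : Fin (m + 1) → Fin (m + 1) → kˣ}
  {H J : Fin (m + 1) → Submodule k R}

lemma map_listProd_fix {N : Submodule k R} :
    ∀ (l : List (R ≃ₐ[k] R)), (∀ e ∈ l, N.map e.toLinearMap = N) →
      N.map (l.prod).toLinearMap = N
  | [], _ => by rw [List.prod_nil, map_aut_one]
  | x :: xs, h => by
      rw [List.prod_cons, map_aut_mul,
        map_listProd_fix xs fun e he => h e (List.mem_cons_of_mem _ he),
        h x (List.mem_cons_self)]

variable (E : SkewLaurent k σ p A)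

lemma skewPair_t (i : Fin (m + 1)) : SkewPair E.ι (E.t i) (σ i) := E.rel_r i

lemma skewPair_tpow (β : Fin (m + 1) → ℤ) :
    SkewPair E.ι (tpow E.t β) (σpow σ β) :=
  SkewPair.listProd (fun i => (skewPair_t E i).zpow (β i)) _

lemma sigmapow_fix_translate (hD : IsBRDatum σ p H J) {Y : Submodule k R}
    (hY : Y = H (Fin.last m) ∨ Y = J (Fin.last m)) (u : ℤ)
    (α : Fin m → ℤ) :
    (Y.map ((σ (Fin.last m)) ^ u).toLinearMap).map
        (σpow σ (Fin.snoc α (0 : ℤ))).toLinearMap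
      = Y.map ((σ (Fin.last m)) ^ u).toLinearMap := by
  refine map_listProd_fix _ ?_
  intro e he
  rcases List.mem_map.mp he with ⟨i, _, rfl⟩
  by_cases hil : i = Fin.last m
  · subst hil
    rw [Fin.snoc_last, zpow_zero, map_aut_one]
  · have h1 : (Y.map ((σ (Fin.last m)) ^ u).toLinearMap).map (σ i).toLinearMap
        = Y.map ((σ (Fin.last m)) ^ u).toLinearMap := fix_translate hD hil hY u
    exact map_fix_zpow h1 _

lemma brComponent_eq (β : Fin (m + 1) → ℤ) :
    brComponent E H J β = (segVec σ H J β).map E.ι.toLinearMap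
      * Submodule.span k {((tpow E.t β : Aˣ) : A)} := by
  unfold brComponent
  rw [map_mulRight_eq]

lemma iota_map_mul (X Y : Submodule k R) :
    (X * Y).map E.ι.toLinearMap = X.map E.ι.toLinearMap * Y.map E.ι.toLinearMap := by
  simpa using Submodule.map_mul X Y E.ι

lemma iota_injective : Function.Injective E.ι := by
  intro a b hab
  have h0 : ((Finsupp.single (0 : Fin (m+1) → ℤ) (a - b)).sum
      fun α r => E.ι r * ((tpow E.t α : Aˣ) : A)) = 0 := by
    rw [Finsupp.sum_single_index]
    · rw [tpow_zero]
      simp [map_sub, hab]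
    · simp
  have := E.repr_free _ h0
  have h2 : a - b = 0 := by
    by_contra hc
    rw [Finsupp.single_eq_zero] at this
    exact hc this
  exact sub_eq_zero.mp h2

end Hh

section Ia
variable {k A : Type*} [Field k] [Ring A] [Algebra k A]

lemma S_mul_S (S : Subalgebra k A) :
    (Subalgebra.toSubmodule S : Submodule k A) * Subalgebra.toSubmodule S
      = Subalgebra.toSubmodule S := by
  apply le_antisymm
  · exact Submodule.mul_le.mpr fun x hx y hy => S.mul_mem hx hy
  · intro x hx
    have := Submodule.mul_mem_mul hx (show (1:A) ∈ Subalgebra.toSubmodule S from S.one_mem)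
    rwa [mul_one] at this

lemma val_map_top (S : Subalgebra k A) :
    (⊤ : Submodule k ↥S).map S.val.toLinearMap = Subalgebra.toSubmodule S := by
  ext x
  constructor
  · rintro ⟨y, -, rfl⟩
    exact y.2
  · intro hx
    exact ⟨⟨x, hx⟩, trivial, rfl⟩

lemma val_map_mul (S : Subalgebra k A) (P Q : Submodule k ↥S) :
    (P * Q).map S.val.toLinearMap
      = P.map S.val.toLinearMap * Q.map S.val.toLinearMap := by
  simpa using Submodule.map_mul P Q S.val

lemma map_one_alg {B : Type*} [Ring B] [Algebra k B] (f : B →ₐ[k] A) :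
    (1 : Submodule k B).map f.toLinearMap = 1 := by
  rw [Submodule.one_eq_span, Submodule.one_eq_span, Submodule.map_span, Set.image_singleton]
  norm_num

lemma val_absorb (S : Subalgebra k A) {P : Submodule k ↥S}
    (hP : ∀ (s x : ↥S), x ∈ P → x * s ∈ P) :
    P.map S.val.toLinearMap * Subalgebra.toSubmodule S = P.map S.val.toLinearMap := by
  apply le_antisymm
  · refine Submodule.mul_le.mpr fun x hx y hy => ?_
    rcases hx with ⟨x', hx', rfl⟩
    exact ⟨x' * ⟨y, hy⟩, hP _ _ hx', rfl⟩
  · intro x hx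
    have := Submodule.mul_mem_mul hx (show (1:A) ∈ Subalgebra.toSubmodule S from S.one_mem)
    rwa [mul_one] at this

lemma map_top_aut {B : Type*} [Ring B] [Algebra k B] (e : B ≃ₐ[k] B) :
    (⊤ : Submodule k B).map e.toLinearMap = ⊤ := by
  ext x
  refine ⟨fun _ => trivial, fun _ => ⟨e.symm x, trivial, e.apply_symm_apply x⟩⟩

/-- Conjugation distributes over products of submodules. -/
lemma conj_mul (u : Aˣ) (X Y : Submodule k A) :
    Submodule.span k {(u:A)} * (X * Y) * Submodule.span k {((u⁻¹:Aˣ):A)}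
      = (Submodule.span k {(u:A)} * X * Submodule.span k {((u⁻¹:Aˣ):A)})
        * (Submodule.span k {(u:A)} * Y * Submodule.span k {((u⁻¹:Aˣ):A)}) := by
  have h1 : Submodule.span k {((u⁻¹:Aˣ):A)} * Submodule.span k {(u:A)}
      = 1 := by
    rw [span_mul_span_singleton, Units.inv_mul, ← Submodule.one_eq_span]
  have h2 : ∀ Z : Submodule k A, Submodule.span k {((u⁻¹:Aˣ):A)}
      * (Submodule.span k {(u:A)} * Z) = Z := by
    intro Z
    rw [← mul_assoc, h1, one_mul]
  simp only [mul_assoc]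
  rw [h2]
end Ia

section Ib
variable {k R A : Type*} [Field k] [Ring R] [Algebra k R] [Ring A] [Algebra k A]
  {m : ℕ} {σ : Fin (m + 1) → R ≃ₐ[k] R} {p : Fin (m + 1) → Fin (m + 1) → kˣ}
  {H J : Fin (m + 1) → Submodule k R}
  {E : SkewLaurent k σ p A} {S : Subalgebra k A}

lemma iota_le_S (hS : Subalgebra.toSubmodule S =
      ⨆ α : Fin m → ℤ, brComponent E H J (Fin.snoc α 0)) (r : R) :
    E.ι r ∈ Subalgebra.toSubmodule S := by
  have h1 : E.ι r ∈ brComponent E H J (Fin.snoc (0 : Fin m → ℤ) (0:ℤ)) := by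
    refine ⟨E.ι r, ⟨r, ?_, rfl⟩, ?_⟩
    · rw [segVec_zero_eq_top]; trivial
    · show E.ι r * ((tpow E.t _ : Aˣ) : A) = E.ι r
      rw [snoc_zero_zero, tpow_zero, Units.val_one, mul_one]
  rw [hS]
  exact Submodule.mem_iSup_of_mem 0 h1

lemma Phi_le_S (hS : Subalgebra.toSubmodule S =
      ⨆ α : Fin m → ℤ, brComponent E H J (Fin.snoc α 0)) (N : Submodule k R) :
    N.map E.ι.toLinearMap ≤ Subalgebra.toSubmodule S := by
  rintro _ ⟨r, -, rfl⟩
  exact iota_le_S hS r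

lemma Phi_mul_S_le (hS : Subalgebra.toSubmodule S =
      ⨆ α : Fin m → ℤ, brComponent E H J (Fin.snoc α 0)) (N : Submodule k R) :
    N.map E.ι.toLinearMap * Subalgebra.toSubmodule S ≤ Subalgebra.toSubmodule S := by
  refine le_trans (mul_le_mul' (Phi_le_S hS N) le_rfl) (le_of_eq (S_mul_S S))

lemma S_eq_iSup (hS : Subalgebra.toSubmodule S =
      ⨆ α : Fin m → ℤ, brComponent E H J (Fin.snoc α 0)) :
    Subalgebra.toSubmodule S = ⨆ α : Fin m → ℤ,
      (segVec σ H J (Fin.snoc α 0)).map E.ι.toLinearMap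
        * Submodule.span k {((tpow E.t (Fin.snoc α 0) : Aˣ) : A)} := by
  rw [hS]
  exact iSup_congr fun α => brComponent_eq E _

lemma S_comm_N (hS : Subalgebra.toSubmodule S =
      ⨆ α : Fin m → ℤ, brComponent E H J (Fin.snoc α 0))
    {N : Submodule k R}
    (hfix : ∀ α : Fin m → ℤ, N.map (σpow σ (Fin.snoc α (0:ℤ))).toLinearMap = N)
    (hcomm : ∀ α : Fin m → ℤ,
      segVec σ H J (Fin.snoc α 0) * N = N * segVec σ H J (Fin.snoc α 0)) :
    Subalgebra.toSubmodule S * N.map E.ι.toLinearMap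
      = N.map E.ι.toLinearMap * Subalgebra.toSubmodule S := by
  rw [S_eq_iSup hS, Submodule.iSup_mul, Submodule.mul_iSup]
  refine iSup_congr fun α => ?_
  have hsp := (skewPair_tpow E (Fin.snoc α 0)).span_mul N
  rw [hfix α] at hsp
  rw [mul_assoc, hsp, ← mul_assoc, ← iota_map_mul, hcomm α, iota_map_mul, mul_assoc]

lemma S_comm_translate (hD : IsBRDatum σ p H J)
    (hS : Subalgebra.toSubmodule S =
      ⨆ α : Fin m → ℤ, brComponent E H J (Fin.snoc α 0))
    {Y : Submodule k R} (hY : Y = H (Fin.last m) ∨ Y = J (Fin.last m)) (u : ℤ) :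
    Subalgebra.toSubmodule S * (Y.map ((σ (Fin.last m)) ^ u).toLinearMap).map E.ι.toLinearMap
      = (Y.map ((σ (Fin.last m)) ^ u).toLinearMap).map E.ι.toLinearMap
        * Subalgebra.toSubmodule S :=
  S_comm_N hS (fun α => sigmapow_fix_translate hD hY u α)
    (fun α => segVec_comm_translate hD hY u (by simp [Fin.snoc_last]))

lemma S_comm_plain (hD : IsBRDatum σ p H J)
    (hS : Subalgebra.toSubmodule S =
      ⨆ α : Fin m → ℤ, brComponent E H J (Fin.snoc α 0))
    {Y : Submodule k R} (hY : Y = H (Fin.last m) ∨ Y = J (Fin.last m)) :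
    Subalgebra.toSubmodule S * Y.map E.ι.toLinearMap
      = Y.map E.ι.toLinearMap * Subalgebra.toSubmodule S := by
  have h := S_comm_translate hD hS hY 0
  rwa [zpow_zero, map_aut_one] at h

variable {σS : ↥S ≃ₐ[k] ↥S}

lemma skewPair_val
    (hσS : ∀ s : ↥S, ((σS s : ↥S) : A) =
      (E.t (Fin.last m) : A) * (s : A) * (((E.t (Fin.last m))⁻¹ : Aˣ) : A)) :
    SkewPair S.val (E.t (Fin.last m)) σS := by
  intro x
  show (E.t (Fin.last m) : A) * (x : A) = ((σS x : ↥S) : A) * (E.t (Fin.last m) : A)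
  rw [hσS x, Units.inv_mul_cancel_right]

lemma val_map_conj
    (hσS : ∀ s : ↥S, ((σS s : ↥S) : A) =
      (E.t (Fin.last m) : A) * (s : A) * (((E.t (Fin.last m))⁻¹ : Aˣ) : A))
    (j : ℤ) (P : Submodule k ↥S) :
    (P.map ((σS ^ j).toLinearMap)).map S.val.toLinearMap
      = Submodule.span k {((E.t (Fin.last m) ^ j : Aˣ) : A)} * P.map S.val.toLinearMap
        * Submodule.span k {(((E.t (Fin.last m) ^ j)⁻¹ : Aˣ) : A)} :=
  ((skewPair_val hσS).zpow j).map_conj P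

lemma conj_S
    (hσS : ∀ s : ↥S, ((σS s : ↥S) : A) =
      (E.t (Fin.last m) : A) * (s : A) * (((E.t (Fin.last m))⁻¹ : Aˣ) : A))
    (j : ℤ) :
    Submodule.span k {((E.t (Fin.last m) ^ j : Aˣ) : A)} * Subalgebra.toSubmodule S
        * Submodule.span k {(((E.t (Fin.last m) ^ j)⁻¹ : Aˣ) : A)}
      = Subalgebra.toSubmodule S := by
  have h := val_map_conj hσS (σS := σS) j ⊤
  rw [map_top_aut, val_map_top] at h
  exact h.symm

variable {HS LS : Submodule k ↥S}

lemma HS_image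
    (hS : Subalgebra.toSubmodule S =
      ⨆ α : Fin m → ℤ, brComponent E H J (Fin.snoc α 0))
    {W : Submodule k ↥S} {Y : Submodule k R}
    (hW : ∀ x : ↥S, x ∈ W ↔
      (x : A) ∈ (Y.map E.ι.toLinearMap) * Subalgebra.toSubmodule S) :
    W.map S.val.toLinearMap
      = Y.map E.ι.toLinearMap * Subalgebra.toSubmodule S := by
  apply le_antisymm
  · rintro _ ⟨x, hx, rfl⟩
    exact (hW x).mp hx
  · intro a ha
    exact ⟨⟨a, Phi_mul_S_le hS _ ha⟩, (hW _).mpr ha, rfl⟩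

lemma HS_isTwoSided (hD : IsBRDatum σ p H J)
    (hS : Subalgebra.toSubmodule S =
      ⨆ α : Fin m → ℤ, brComponent E H J (Fin.snoc α 0))
    {W : Submodule k ↥S} {Y : Submodule k R}
    (hY : Y = H (Fin.last m) ∨ Y = J (Fin.last m))
    (hW : ∀ x : ↥S, x ∈ W ↔
      (x : A) ∈ (Y.map E.ι.toLinearMap) * Subalgebra.toSubmodule S) :
    IsTwoSided W := by
  have habs : Y.map E.ι.toLinearMap * Subalgebra.toSubmodule S * Subalgebra.toSubmodule S
      = Y.map E.ι.toLinearMap * Subalgebra.toSubmodule S := by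
    rw [mul_assoc, S_mul_S]
  have hl : Subalgebra.toSubmodule S
        * (Y.map E.ι.toLinearMap * Subalgebra.toSubmodule S)
      = Y.map E.ι.toLinearMap * Subalgebra.toSubmodule S := by
    rw [← mul_assoc, S_comm_plain hD hS hY, mul_assoc, S_mul_S]
  constructor
  · intro r x hx
    refine (hW _).mpr ?_
    have hmem : ((r * x : ↥S) : A)
        ∈ Subalgebra.toSubmodule S * (Y.map E.ι.toLinearMap * Subalgebra.toSubmodule S) :=
      Submodule.mul_mem_mul r.2 ((hW x).mp hx)
    rwa [hl] at hmem
  · intro r x hx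
    refine (hW _).mpr ?_
    have hmem : ((x * r : ↥S) : A)
        ∈ Y.map E.ι.toLinearMap * Subalgebra.toSubmodule S * Subalgebra.toSubmodule S :=
      Submodule.mul_mem_mul ((hW x).mp hx) r.2
    rwa [habs] at hmem

lemma assoc_helper {M : Type*} [Monoid M] {a b s x : M} (hs : s * s = s)
    (hc : s * b = b * s) (hih : a * s = x * s) : a * (b * s) * s = x * b * s := by
  calc a * (b * s) * s = a * (b * (s * s)) := by rw [mul_assoc, mul_assoc]
    _ = a * (b * s) := by rw [hs]
    _ = a * (s * b) := by rw [hc]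
    _ = a * s * b := by rw [← mul_assoc]
    _ = x * s * b := by rw [hih]
    _ = x * (s * b) := by rw [mul_assoc]
    _ = x * (b * s) := by rw [hc]
    _ = x * b * s := by rw [← mul_assoc]

lemma gen_image (hD : IsBRDatum σ p H J)
    (hS : Subalgebra.toSubmodule S =
      ⨆ α : Fin m → ℤ, brComponent E H J (Fin.snoc α 0))
    (hσS : ∀ s : ↥S, ((σS s : ↥S) : A) =
      (E.t (Fin.last m) : A) * (s : A) * (((E.t (Fin.last m))⁻¹ : Aˣ) : A))
    {P : Submodule k ↥S} {N : Submodule k R}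
    (hpn : P.map S.val.toLinearMap
      = N.map E.ι.toLinearMap * Subalgebra.toSubmodule S)
    (hY : N = H (Fin.last m) ∨ N = J (Fin.last m)) (f : ℕ → ℤ) (c : ℕ) :
    (((List.range c).map fun i : ℕ =>
        P.map (σS ^ (f i)).toLinearMap).prod).map S.val.toLinearMap
        * Subalgebra.toSubmodule S
      = (((List.range c).map fun i : ℕ =>
          N.map ((σ (Fin.last m)) ^ (f i)).toLinearMap).prod).map E.ι.toLinearMap
        * Subalgebra.toSubmodule S := by
  induction c with
  | zero =>
    simp only [List.range_zero, List.map_nil, List.prod_nil]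
    rw [map_one_alg, map_one_alg]
  | succ c ih =>
    rw [List.range_succ, List.map_append, List.map_append, List.prod_append,
      List.prod_append]
    simp only [List.map_cons, List.map_nil, List.prod_cons, List.prod_nil, mul_one]
    rw [val_map_mul, iota_map_mul]
    have hconj : (P.map (σS ^ (f c)).toLinearMap).map S.val.toLinearMap
        = (N.map ((σ (Fin.last m)) ^ (f c)).toLinearMap).map E.ι.toLinearMap
          * Subalgebra.toSubmodule S := by
      rw [val_map_conj hσS, hpn, conj_mul, conj_S hσS (σS := σS) (f c),
        ← ((skewPair_t E (Fin.last m)).zpow (f c)).map_conj N]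
    rw [hconj]
    exact assoc_helper (S_mul_S S) (S_comm_translate hD hS hY (f c)) ih

lemma Phi_top_mul_S
    (hS : Subalgebra.toSubmodule S =
      ⨆ α : Fin m → ℤ, brComponent E H J (Fin.snoc α 0)) :
    (⊤ : Submodule k R).map E.ι.toLinearMap * Subalgebra.toSubmodule S
      = Subalgebra.toSubmodule S := by
  apply le_antisymm (Phi_mul_S_le hS _)
  intro x hx
  have h1 : (1 : A) ∈ (⊤ : Submodule k R).map E.ι.toLinearMap :=
    ⟨1, trivial, map_one E.ι⟩
  have := Submodule.mul_mem_mul h1 hx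
  rwa [one_mul] at this

lemma image_seg (hD : IsBRDatum σ p H J)
    (hS : Subalgebra.toSubmodule S =
      ⨆ α : Fin m → ℤ, brComponent E H J (Fin.snoc α 0))
    (hσS : ∀ s : ↥S, ((σS s : ↥S) : A) =
      (E.t (Fin.last m) : A) * (s : A) * (((E.t (Fin.last m))⁻¹ : Aˣ) : A))
    (hHS : ∀ x : ↥S, x ∈ HS ↔
      (x : A) ∈ ((H (Fin.last m)).map E.ι.toLinearMap) * Subalgebra.toSubmodule S)
    (hLS : ∀ x : ↥S, x ∈ LS ↔
      (x : A) ∈ ((J (Fin.last m)).map E.ι.toLinearMap) * Subalgebra.toSubmodule S)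
    (ℓ : ℤ) :
    (seg σS HS LS ℓ).map S.val.toLinearMap
      = (seg (σ (Fin.last m)) (H (Fin.last m)) (J (Fin.last m)) ℓ).map E.ι.toLinearMap
        * Subalgebra.toSubmodule S := by
  rcases lt_trichotomy ℓ 0 with hl | rfl | hl
  · rw [seg_neg_eq _ _ _ hl, seg_neg_eq _ _ _ hl]
    have hts : IsTwoSided (((List.range (-ℓ).toNat).map fun i : ℕ =>
        HS.map (σS ^ (-((i:ℤ) + 1))).toLinearMap).prod) := by
      refine isTwoSided_listProd _ ?_ ?_
      · intro hcon
        have h3 := congrArg List.length hcon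
        simp only [List.length_map, List.length_range, List.length_nil] at h3
        omega
      · intro M hM
        rcases List.mem_map.mp hM with ⟨i, _, rfl⟩
        exact (HS_isTwoSided hD hS (Or.inl rfl) hHS).mapAut _
    calc (((List.range (-ℓ).toNat).map fun i : ℕ =>
          HS.map (σS ^ (-((i:ℤ) + 1))).toLinearMap).prod).map S.val.toLinearMap
        = (((List.range (-ℓ).toNat).map fun i : ℕ =>
            HS.map (σS ^ (-((i:ℤ) + 1))).toLinearMap).prod).map S.val.toLinearMap
            * Subalgebra.toSubmodule S := (val_absorb S hts.2).symm
      _ = _ := gen_image hD hS hσS (HS_image hS hHS) (Or.inl rfl)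
            (fun i : ℕ => -((i:ℤ) + 1)) (-ℓ).toNat
  · rw [seg_zero, seg_zero, val_map_top, Phi_top_mul_S hS]
  · rw [seg_pos_eq _ _ _ hl, seg_pos_eq _ _ _ hl]
    have hts : IsTwoSided (((List.range ℓ.toNat).map fun i : ℕ =>
        LS.map (σS ^ (i:ℤ)).toLinearMap).prod) := by
      refine isTwoSided_listProd _ ?_ ?_
      · intro hcon
        have h3 := congrArg List.length hcon
        simp only [List.length_map, List.length_range, List.length_nil] at h3
        omega
      · intro M hM
        rcases List.mem_map.mp hM with ⟨i, _, rfl⟩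
        exact (HS_isTwoSided hD hS (Or.inr rfl) hLS).mapAut _
    calc (((List.range ℓ.toNat).map fun i : ℕ =>
          LS.map (σS ^ (i:ℤ)).toLinearMap).prod).map S.val.toLinearMap
        = (((List.range ℓ.toNat).map fun i : ℕ =>
            LS.map (σS ^ (i:ℤ)).toLinearMap).prod).map S.val.toLinearMap
            * Subalgebra.toSubmodule S := (val_absorb S hts.2).symm
      _ = _ := gen_image hD hS hσS (HS_image hS hLS) (Or.inr rfl)
            (fun i : ℕ => (i:ℤ)) ℓ.toNat

lemma tpow_snoc_mul (t : Fin (m+1) → Aˣ) (α : Fin m → ℤ) (ℓ : ℤ) :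
    tpow t (Fin.snoc α 0) * t (Fin.last m) ^ ℓ = tpow t (Fin.snoc α ℓ) := by
  rw [tpow_snoc, tpow_snoc, zpow_zero, mul_one]

lemma component_sup (hD : IsBRDatum σ p H J)
    (hS : Subalgebra.toSubmodule S =
      ⨆ α : Fin m → ℤ, brComponent E H J (Fin.snoc α 0)) (ℓ : ℤ) :
    (seg (σ (Fin.last m)) (H (Fin.last m)) (J (Fin.last m)) ℓ).map E.ι.toLinearMap
        * Subalgebra.toSubmodule S
        * Submodule.span k {((E.t (Fin.last m) ^ ℓ : Aˣ) : A)}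
      = ⨆ α : Fin m → ℤ, brComponent E H J (Fin.snoc α ℓ) := by
  rw [S_eq_iSup hS, Submodule.mul_iSup, Submodule.iSup_mul]
  refine iSup_congr fun α => ?_
  rw [← mul_assoc, ← iota_map_mul, ← segVec_comm_seg hD (by simp [Fin.snoc_last] :
      (Fin.snoc α 0 : Fin (m+1) → ℤ) (Fin.last m) = 0) ℓ,
    ← segVec_snoc_full hD, mul_assoc, span_mul_span_singleton, ← Units.val_mul,
    tpow_snoc_mul, ← brComponent_eq]

end Ib

/-- A BR algebra of rank `n > 1` can be expressed as a BR algebra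
of rank `1` over the BR algebra `S` of rank `n - 1` obtained from the first `n - 1`
coordinates of the data: extending `σₙ` to `S` by conjugation by `tₙ` (that is,
`σₙ(tᵢ) = p_{in} tᵢ` for `i < n`), and setting `Ĥ = Hₙ S`, `Ĵ = Jₙ S`, the data
`(S, tₙ, σₙ, Ĥ, Ĵ)` is a Bell–Rogalski datum of rank `1`, and the resulting rank-`1`
BR algebra `S(tₙ, σₙ, Ĥ, Ĵ)` is a `ℤ^{n-1} × ℤ = ℤⁿ`-graded ring that is graded
isomorphic to `B`. -/
theorem brAlgebra_iterated
    {k R A : Type*} [Field k] [Ring R] [Algebra k R] [Ring A] [Algebra k A]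
    {m : ℕ} (hm : 0 < m)
    {σ : Fin (m + 1) → R ≃ₐ[k] R} {p : Fin (m + 1) → Fin (m + 1) → kˣ}
    {H J : Fin (m + 1) → Submodule k R} (hD : IsBRDatum σ p H J)
    (E : SkewLaurent k σ p A) (B : Subalgebra k A)
    (hB : Subalgebra.toSubmodule B = brSubmodule E H J)
    -- `S` is the rank `n - 1` BR algebra built from the first `n - 1` coordinates,
    -- realized inside the skew Laurent extension
    (S : Subalgebra k A)
    (hS : Subalgebra.toSubmodule S =
      ⨆ α : Fin m → ℤ, brComponent E H J (Fin.snoc α 0))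
    -- the extension of `σₙ` to `S`, given by conjugation by `tₙ`
    (σS : ↥S ≃ₐ[k] ↥S)
    (hσS : ∀ s : ↥S, ((σS s : ↥S) : A) =
      (E.t (Fin.last m) : A) * (s : A) * (((E.t (Fin.last m))⁻¹ : Aˣ) : A))
    -- the ideals `Ĥ = Hₙ S` and `Ĵ = Jₙ S` of `S`
    (HS LS : Submodule k ↥S)
    (hHS : ∀ x : ↥S, x ∈ HS ↔
      (x : A) ∈ ((H (Fin.last m)).map E.ι.toLinearMap) * Subalgebra.toSubmodule S)
    (hLS : ∀ x : ↥S, x ∈ LS ↔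
      (x : A) ∈ ((J (Fin.last m)).map E.ι.toLinearMap) * Subalgebra.toSubmodule S) :
    -- `(S, tₙ, σₙ, Ĥ, Ĵ)` is a rank-one Bell–Rogalski datum over `S`
    (IsBRDatum (fun _ : Fin 1 => σS) (fun _ _ => (1 : kˣ))
      (fun _ => HS) (fun _ => LS)) ∧
    -- the `ℤ`-graded pieces `Î^{(ℓ)} tₙ^ℓ` of the rank-one BR algebra over `S`
    -- recover exactly the `ℤ^{n-1} × ℤ = ℤⁿ`-graded pieces of `B`
    (∀ ℓ : ℤ,
      ((seg σS HS LS ℓ).map S.val.toLinearMap).map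
        (LinearMap.mulRight k (((E.t (Fin.last m) ^ ℓ : Aˣ) : A))) =
      ⨆ α : Fin m → ℤ, brComponent E H J (Fin.snoc α ℓ)) ∧
    -- in particular the rank-one BR algebra over `S` equals `B`
    ((⨆ ℓ : ℤ, ((seg σS HS LS ℓ).map S.val.toLinearMap).map
        (LinearMap.mulRight k (((E.t (Fin.last m) ^ ℓ : Aˣ) : A)))) =
      Subalgebra.toSubmodule B) := by
  have hHts : IsTwoSided HS := HS_isTwoSided hD hS (Or.inl rfl) hHS
  have hLts : IsTwoSided LS := HS_isTwoSided hD hS (Or.inr rfl) hLS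
  have key2 : ∀ ℓ : ℤ,
      ((seg σS HS LS ℓ).map S.val.toLinearMap).map
        (LinearMap.mulRight k (((E.t (Fin.last m) ^ ℓ : Aˣ) : A))) =
      ⨆ α : Fin m → ℤ, brComponent E H J (Fin.snoc α ℓ) := by
    intro ℓ
    rw [map_mulRight_eq, image_seg hD hS hσS hHS hLS ℓ, component_sup hD hS ℓ]
  refine ⟨?_, key2, ?_⟩
  · refine ⟨fun i j => rfl, fun i j => inv_one.symm, fun i => hHts.1, fun i => hHts.2,
      fun i => hLts.1, fun i => hLts.2,
      fun i j hij => absurd (Subsingleton.elim i j) hij,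
      fun i j hij => absurd (Subsingleton.elim i j) hij,
      fun i j hij => absurd (Subsingleton.elim i j) hij,
      fun i j hij => absurd (Subsingleton.elim i j) hij,
      fun i j hij => absurd (Subsingleton.elim i j) hij, ?_⟩
    intro i ℓ
    obtain ⟨r, hr, hr0⟩ := (Submodule.ne_bot_iff _).mp (hD.seg_ne_bot (Fin.last m) ℓ)
    have hmem : E.ι r ∈ (seg σS HS LS ℓ).map S.val.toLinearMap := by
      rw [image_seg hD hS hσS hHS hLS ℓ]
      have h1 : E.ι r ∈ (seg (σ (Fin.last m)) (H (Fin.last m)) (J (Fin.last m)) ℓ).map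
          E.ι.toLinearMap := ⟨r, hr, rfl⟩
      have h2 := Submodule.mul_mem_mul h1
        (show (1:A) ∈ Subalgebra.toSubmodule S from S.one_mem)
      rwa [mul_one] at h2
    obtain ⟨y, hy, hyr⟩ := hmem
    intro hbot
    rw [hbot] at hy
    have hy0 : y = 0 := by simpa using hy
    apply hr0
    refine iota_injective E ?_
    have h5 : E.ι r = 0 := by rw [← hyr, hy0]; rfl
    rw [h5, map_zero]
  · calc (⨆ ℓ : ℤ, ((seg σS HS LS ℓ).map S.val.toLinearMap).map
        (LinearMap.mulRight k (((E.t (Fin.last m) ^ ℓ : Aˣ) : A))))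
        = ⨆ ℓ : ℤ, ⨆ α : Fin m → ℤ, brComponent E H J (Fin.snoc α ℓ) :=
          iSup_congr key2
      _ = ⨆ β : Fin (m+1) → ℤ, brComponent E H J β := by
          apply le_antisymm
          · exact iSup_le fun ℓ => iSup_le fun α => le_iSup _ _
          · refine iSup_le fun β => ?_
            have hβ : brComponent E H J β
                = brComponent E H J (Fin.snoc (Fin.init β) (β (Fin.last m))) := by
              rw [Fin.snoc_init_self]
            rw [hβ]
            exact le_trans
              (le_iSup (fun α => brComponent E H J (Fin.snoc α (β (Fin.last m))))
                (Fin.init β))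
              (le_iSup (fun ℓ : ℤ => ⨆ α : Fin m → ℤ,
                brComponent E H J (Fin.snoc α ℓ)) (β (Fin.last m)))
      _ = Subalgebra.toSubmodule B := hB.symm


end BR
end

section
/- Let R be a commutative domain over a field k and let R_p[t^{+-1}; sigma] be an iterated skew Laurent extension of rank n. Let phi be an automorphism of R of finite order such that phi sigma_i = sigma_i phi for all i in [n]. Let gamma in (k^x)^n and extend phi to the automorphism Phi_gamma of R_p[t^{+-1}; sigma] determined by Phi_gamma(t_i^{+-1}) = gamma_i^{+-1} t_i^{+-1} and Phi_gamma(r) = phi(r) for r in R. Let m_i be the multiplicative order of gamma_i and suppose ord(phi), m_1, ..., m_n are pairwise coprime. Then the fixed ring (R_p[t^{+-1}; sigma])^{<Phi_gamma>} equals the iterated skew Laurent extension (R^{<phi>})_q[s^{+-1}; tau], where q = (q_{im}) with q_{im} = p_{im}^{m_i m_m}, s = (s_i) with s_i = t_i^{m_i}, and tau = (tau_i) with tau_i = sigma_i^{m_i}. -/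
open scoped Pointwise TensorProduct

namespace BR

section FixedRingAux

variable {k A : Type*} [Field k] [Ring A] [Algebra k A]

/-- The scalar `Λ(α) = γ₁^{α₁} ⋯ γₙ^{αₙ}`. -/
def auxΛ {G : Type*} [Group G] {n : ℕ} (γ : Fin n → G) (α : Fin n → ℤ) : G :=
  ((List.finRange n).map fun i => γ i ^ α i).prod

lemma aux_gpow_ord {G : Type*} [Group G] (γ : G) (a : ℤ) (M : ℕ) (h : orderOf γ ∣ M) :
    (γ ^ a) ^ (M : ℕ) = 1 := by
  rw [← zpow_natCast, ← zpow_mul, mul_comm, zpow_mul, zpow_natCast,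
    orderOf_dvd_iff_pow_eq_one.mp h, one_zpow]

lemma aux_eq_one_of_pow_coprime {G : Type*} [Monoid G] {a : G} {d M : ℕ}
    (hd : a ^ d = 1) (hM : a ^ M = 1) (h : Nat.Coprime d M) : a = 1 := by
  have h1 := Nat.dvd_gcd (orderOf_dvd_of_pow_eq_one hd) (orderOf_dvd_of_pow_eq_one hM)
  rw [h.gcd_eq_one] at h1
  exact orderOf_eq_one_iff.mp (Nat.eq_one_of_dvd_one h1)

lemma aux_eq_one_of_prod_eq_one {G : Type*} [CommGroup G] {n : ℕ} (g : Fin n → G)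
    (N : Fin n → ℕ) (hN : ∀ i, g i ^ N i = 1)
    (hcop : ∀ i j, i ≠ j → Nat.Coprime (N i) (N j))
    (h : ∏ i, g i = 1) (i : Fin n) : g i = 1 := by
  set M := ∏ j ∈ Finset.univ.erase i, N j with hM
  have h1 : g i ^ M = 1 := by
    have h2 : (∏ j, g j) ^ M = 1 := by rw [h, one_pow]
    rw [← Finset.prod_pow] at h2
    rwa [Finset.prod_eq_single i
      (fun j _ hj => orderOf_dvd_iff_pow_eq_one.mp
        ((orderOf_dvd_of_pow_eq_one (hN j)).trans
          (Finset.dvd_prod_of_mem N (Finset.mem_erase.mpr ⟨hj, Finset.mem_univ j⟩))))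
      (fun hi => absurd (Finset.mem_univ i) hi)] at h2
  exact aux_eq_one_of_pow_coprime (hN i) h1
    (Nat.Coprime.prod_right fun j hj => hcop i j (Ne.symm (Finset.mem_erase.mp hj).1))

lemma aux_dvd_of_Lambda_eq_one {G : Type*} [CommGroup G] {n : ℕ} (γ : Fin n → G)
    (α : Fin n → ℤ)
    (hcop : ∀ i j, i ≠ j → Nat.Coprime (orderOf (γ i)) (orderOf (γ j)))
    (h : auxΛ γ α = 1) (i : Fin n) : ((orderOf (γ i) : ℤ)) ∣ α i := by
  have h' : ∏ j, γ j ^ α j = 1 := by rw [Fin.prod_univ_def]; exact h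
  exact orderOf_dvd_iff_zpow_eq_one.mpr
    (aux_eq_one_of_prod_eq_one (fun j => γ j ^ α j) (fun j => orderOf (γ j))
      (fun j => aux_gpow_ord _ _ _ dvd_rfl) hcop h' i)

lemma aux_Lambda_pow_prod {G : Type*} [CommGroup G] {n : ℕ} (γ : Fin n → G)
    (α : Fin n → ℤ) : auxΛ γ α ^ (∏ i, orderOf (γ i)) = 1 := by
  have h : auxΛ γ α = ∏ j, γ j ^ α j := (Fin.prod_univ_def _).symm
  rw [h, ← Finset.prod_pow]
  exact Finset.prod_eq_one fun j _ =>
    aux_gpow_ord _ _ _ (Finset.dvd_prod_of_mem _ (Finset.mem_univ j))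

lemma aux_scalar_of_fixed {k R : Type*} [Field k] [CommRing R] [IsDomain R] [Algebra k R]
    (φ : R ≃ₐ[k] R) (Λ : kˣ) (c : R) (hc : c ≠ 0)
    (h : ((Λ : kˣ) : k) • φ c = c) : Λ ^ orderOf φ = 1 := by
  haveI : NoZeroSMulDivisors k R :=
    inferInstance
  have hφc : φ c = ((Λ⁻¹ : kˣ) : k) • c := by
    have := congrArg (fun x => ((Λ⁻¹ : kˣ) : k) • x) h
    simp only [smul_smul] at this
    rw [← Units.val_mul, inv_mul_cancel, Units.val_one, one_smul] at this
    exact this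
  have key : ∀ j : ℕ, (φ ^ j) c = (((Λ⁻¹ : kˣ) ^ j : kˣ) : k) • c := by
    intro j
    induction j with
    | zero => simp
    | succ j ih =>
      rw [pow_succ', AlgEquiv.mul_apply, ih, map_smul, hφc, smul_smul, ← Units.val_mul,
        ← pow_succ]
  have hd := key (orderOf φ)
  rw [pow_orderOf_eq_one, AlgEquiv.one_apply] at hd
  have hzero : ((((Λ⁻¹ : kˣ) ^ orderOf φ : kˣ) : k) - 1) • c = 0 := by
    rw [sub_smul, one_smul, ← hd, sub_self]
  have h1 : (((Λ⁻¹ : kˣ) ^ orderOf φ : kˣ) : k) = 1 := by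
    rcases smul_eq_zero.mp hzero with h' | h'
    · exact sub_eq_zero.mp h'
    · exact absurd h' hc
  have h2 : (Λ⁻¹ : kˣ) ^ orderOf φ = 1 := Units.ext (by simpa using h1)
  rw [inv_pow, inv_eq_one] at h2
  exact h2

lemma aux_commute_algUnit (c : kˣ) (x : Aˣ) :
    Commute ((Units.map (algebraMap k A).toMonoidHom) c) x := by
  apply Units.ext
  simp only [Units.val_mul, Units.coe_map, RingHom.toMonoidHom_eq_coe, MonoidHom.coe_coe]
  exact Algebra.commutes c.val x.val

lemma aux_alg_mul_mul (a b : k) (x y : A) :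
    (algebraMap k A a * x) * (algebraMap k A b * y) = algebraMap k A (a * b) * (x * y) := by
  rw [map_mul, mul_assoc, ← mul_assoc x, ← Algebra.commutes b x, mul_assoc, ← mul_assoc]

lemma aux_Phi_t_zpow {n : ℕ} (t : Fin n → Aˣ) (Φ : A ≃ₐ[k] A) (γ : Fin n → kˣ)
    (hΦt : ∀ i, Φ ((t i : A)) = algebraMap k A (γ i) * (t i : A))
    (i : Fin n) (m : ℤ) :
    Φ ((t i ^ m : Aˣ) : A) = algebraMap k A ((γ i ^ m : kˣ) : k) * ((t i ^ m : Aˣ) : A) := by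
  set Φu : Aˣ →* Aˣ := Units.map (Φ : A →* A) with hΦu
  have h1 : Φu (t i) = (Units.map (algebraMap k A).toMonoidHom) (γ i) * t i := by
    apply Units.ext
    simp only [hΦu, Units.coe_map, Units.val_mul, RingHom.toMonoidHom_eq_coe,
      MonoidHom.coe_coe]
    exact hΦt i
  have h2 : Φu (t i ^ m) = (Units.map (algebraMap k A).toMonoidHom) (γ i ^ m) * t i ^ m := by
    rw [map_zpow, h1, (aux_commute_algUnit (γ i) (t i)).mul_zpow, map_zpow]
  have h3 := congrArg (Units.val) h2
  simpa only [hΦu, Units.coe_map, Units.val_mul, RingHom.toMonoidHom_eq_coe,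
    MonoidHom.coe_coe] using h3

lemma aux_Phi_tpow {n : ℕ} (t : Fin n → Aˣ) (Φ : A ≃ₐ[k] A) (γ : Fin n → kˣ)
    (hΦt : ∀ i, Φ ((t i : A)) = algebraMap k A (γ i) * (t i : A)) (α : Fin n → ℤ) :
    Φ ((tpow t α : Aˣ) : A)
      = algebraMap k A ((auxΛ γ α : kˣ) : k) * ((tpow t α : Aˣ) : A) := by
  unfold tpow auxΛ
  induction (List.finRange n) with
  | nil => simp
  | cons a l ih =>
    simp only [List.map_cons, List.prod_cons, Units.val_mul, map_mul, ih,
      aux_Phi_t_zpow t Φ γ hΦt a (α a)]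
    rw [aux_alg_mul_mul, map_mul]

end FixedRingAux

/-- Let `R` be a commutative domain and `R_p[t^{±1}; σ]` an
iterated skew Laurent extension of rank `n`.  Let `φ` be a finite-order
automorphism of `R` commuting with every `σᵢ`, let `γ ∈ (kˣ)ⁿ`, and extend `φ` to
the automorphism `Φ_γ` with `Φ_γ(tᵢ^{±1}) = γᵢ^{±1} tᵢ^{±1}`.  If the orders
`ord(φ), m₁, …, mₙ` (with `mᵢ` the order of `γᵢ`) are pairwise coprime, then the
fixed ring `(R_p[t^{±1}; σ])^{⟨Φ_γ⟩}` equals the iterated skew Laurent extension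
`(R^{⟨φ⟩})_q[s^{±1}; τ]` with `q_{im} = p_{im}^{mᵢ mₘ}`, `sᵢ = tᵢ^{mᵢ}`,
`τᵢ = σᵢ^{mᵢ}`. -/
theorem skewLaurent_fixedRing
    {k R A : Type*} [Field k] [CommRing R] [IsDomain R] [Algebra k R]
    [Ring A] [Algebra k A]
    {n : ℕ} {σ : Fin n → R ≃ₐ[k] R} {p : Fin n → Fin n → kˣ}
    (hσcomm : ∀ i j, σ i * σ j = σ j * σ i)
    (hp : ∀ i j, p i j = (p j i)⁻¹)
    (E : SkewLaurent k σ p A)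
    (φ : R ≃ₐ[k] R) (hφfin : IsOfFinOrder φ)
    (hφσ : ∀ i, φ * σ i = σ i * φ)
    (γ : Fin n → kˣ) (hγfin : ∀ i, IsOfFinOrder (γ i))
    -- the extension `Φ_γ` of `φ` to the skew Laurent ring
    (Φ : A ≃ₐ[k] A)
    (hΦr : ∀ r : R, Φ (E.ι r) = E.ι (φ r))
    (hΦt : ∀ i, Φ ((E.t i : A)) = algebraMap k A (γ i) * (E.t i : A))
    -- `ord(φ), m₁, …, mₙ` are pairwise coprime
    (hcop1 : ∀ i, Nat.Coprime (orderOf φ) (orderOf (γ i)))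
    (hcop2 : ∀ i j, i ≠ j → Nat.Coprime (orderOf (γ i)) (orderOf (γ j))) :
    -- the fixed ring is `⊕_β R^{⟨φ⟩} s^β` with `sᵢ = tᵢ^{mᵢ}`, realized inside `A`
    ∀ x : A, Φ x = x ↔ x ∈ ⨆ β : Fin n → ℤ,
      ((LinearMap.ker (φ.toLinearMap - LinearMap.id)).map E.ι.toLinearMap).map
        (LinearMap.mulRight k
          ((tpow E.t (fun i => (orderOf (γ i) : ℤ) * β i) : Aˣ) : A)) := by
  classical
  intro x
  constructor
  · -- forward direction
    intro hx
    obtain ⟨c, hc⟩ := E.repr_exists x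
    have hΦsum : Φ x = c.sum fun α r =>
        E.ι (((auxΛ γ α : kˣ) : k) • φ r) * ((tpow E.t α : Aˣ) : A) := by
      rw [hc, map_finsuppSum]
      refine Finsupp.sum_congr fun α _ => ?_
      rw [map_mul, hΦr, aux_Phi_tpow E.t Φ γ hΦt, map_smul, Algebra.smul_def,
        ← mul_assoc, ← Algebra.commutes, mul_assoc]
    have hgsupp : ∀ α, (((auxΛ γ α : kˣ) : k) • φ (c α) - c α) ≠ 0 → α ∈ c.support := by
      intro α hα
      rw [Finsupp.mem_support_iff]
      intro h0
      exact hα (by rw [h0]; simp)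
    set d : (Fin n → ℤ) →₀ R :=
      Finsupp.onFinset c.support (fun α => ((auxΛ γ α : kˣ) : k) • φ (c α) - c α) hgsupp
      with hd
    have hdsum : (d.sum fun α r => E.ι r * ((tpow E.t α : Aˣ) : A)) = 0 := by
      rw [Finsupp.sum_of_support_subset d Finsupp.support_onFinset_subset _
        (fun i _ => by simp)]
      have h1 : ∀ α ∈ c.support,
          E.ι (d α) * ((tpow E.t α : Aˣ) : A)
            = E.ι (((auxΛ γ α : kˣ) : k) • φ (c α)) * ((tpow E.t α : Aˣ) : A)
              - E.ι (c α) * ((tpow E.t α : Aˣ) : A) := by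
        intro α _
        rw [hd, Finsupp.onFinset_apply, map_sub, sub_mul]
      rw [Finset.sum_congr rfl h1, Finset.sum_sub_distrib]
      have hx1 : (∑ α ∈ c.support,
          E.ι (((auxΛ γ α : kˣ) : k) • φ (c α)) * ((tpow E.t α : Aˣ) : A)) = Φ x :=
        hΦsum.symm
      have hx2 : (∑ α ∈ c.support, E.ι (c α) * ((tpow E.t α : Aˣ) : A)) = x := hc.symm
      rw [hx1, hx2, hx, sub_self]
    have hd0 := E.repr_free d hdsum
    have hkey : ∀ α, ((auxΛ γ α : kˣ) : k) • φ (c α) = c α := by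
      intro α
      have h2 : d α = 0 := by rw [hd0]; rfl
      rw [hd, Finsupp.onFinset_apply] at h2
      exact sub_eq_zero.mp h2
    rw [hc]
    refine Submodule.finsuppSum_mem k _ c (fun α r => E.ι r * ((tpow E.t α : Aˣ) : A)) fun α hα => ?_
    have hΛ1 : auxΛ γ α = 1 :=
      aux_eq_one_of_pow_coprime
        (aux_scalar_of_fixed φ (auxΛ γ α) (c α) hα (hkey α))
        (aux_Lambda_pow_prod γ α)
        (Nat.Coprime.prod_right fun i _ => hcop1 i)
    have hφc : φ (c α) = c α := by
      have h3 := hkey α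
      rwa [hΛ1, Units.val_one, one_smul] at h3
    have hdvd := aux_dvd_of_Lambda_eq_one γ α hcop2 hΛ1
    have hαβ : (fun i => ((orderOf (γ i) : ℤ)) * (α i / (orderOf (γ i) : ℤ))) = α :=
      funext fun i => Int.mul_ediv_cancel' (hdvd i)
    apply Submodule.mem_iSup_of_mem (fun i => α i / (orderOf (γ i) : ℤ))
    rw [Submodule.mem_map]
    refine ⟨E.ι (c α), Submodule.mem_map_of_mem ?_, ?_⟩
    · rw [LinearMap.mem_ker, LinearMap.sub_apply, LinearMap.id_apply,
        AlgEquiv.toLinearMap_apply, hφc, sub_self]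
    · rw [LinearMap.mulRight_apply]
      exact congrArg (fun αf : Fin n → ℤ => E.ι (c α) * ((tpow E.t αf : Aˣ) : A)) hαβ
  · -- reverse direction
    intro hx
    have hle : (⨆ β : Fin n → ℤ,
        ((LinearMap.ker (φ.toLinearMap - LinearMap.id)).map E.ι.toLinearMap).map
          (LinearMap.mulRight k
            ((tpow E.t (fun i => (orderOf (γ i) : ℤ) * β i) : Aˣ) : A)))
        ≤ LinearMap.ker (Φ.toLinearMap - LinearMap.id) := by
      refine iSup_le fun β => ?_
      intro y hy
      simp only [Submodule.mem_map] at hy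
      obtain ⟨z, ⟨r, hr, rfl⟩, rfl⟩ := hy
      simp only [LinearMap.mem_ker, LinearMap.sub_apply, LinearMap.id_apply,
        AlgEquiv.toLinearMap_apply, LinearMap.mulRight_apply, AlgHom.toLinearMap_apply,
        sub_eq_zero] at hr ⊢
      rw [map_mul, hΦr, aux_Phi_tpow E.t Φ γ hΦt, hr]
      have hΛ : auxΛ γ (fun i => ((orderOf (γ i) : ℤ)) * β i) = 1 := by
        unfold auxΛ
        apply List.prod_eq_one
        intro u hu
        simp only [List.mem_map] at hu
        obtain ⟨i, -, rfl⟩ := hu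
        rw [zpow_mul, zpow_natCast, pow_orderOf_eq_one, one_zpow]
      rw [hΛ, Units.val_one, map_one, one_mul]
    have h4 := hle hx
    simpa only [LinearMap.mem_ker, LinearMap.sub_apply, LinearMap.id_apply,
      AlgEquiv.toLinearMap_apply, sub_eq_zero] using h4

end BR
end

section
/- Let R be a commutative k-algebra, B = R_p(t,sigma,H,J) a BR algebra of rank n, O a torsion-free orbit in Maxspec(R), and m in O an i-break. Let M be a simple weight B-module supported on O. Then B_{e_i} M_m = 0 and B_{-e_i} M_{sigma_i(m)} = 0. -/
open scoped Pointwise TensorProduct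

namespace BR

section AuxListProd

lemma list_prod_map_mul' {M : Type*} [Monoid M] {ι : Type*} (f g : ι → M)
    (h : ∀ i j, Commute (f i) (g j)) (l : List ι) :
    (l.map f).prod * (l.map g).prod = (l.map fun i => f i * g i).prod := by
  induction l with
  | nil => simp
  | cons a l ih =>
    simp only [List.map_cons, List.prod_cons]
    have hc : Commute ((l.map f).prod) (g a) :=
      (Commute.list_prod_right _ _ (fun x hx => by
        obtain ⟨b, _, rfl⟩ := List.mem_map.mp hx
        exact (h b a).symm)).symm
    calc f a * (l.map f).prod * (g a * (l.map g).prod)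
        = f a * ((l.map f).prod * g a) * (l.map g).prod := by group
      _ = f a * (g a * (l.map f).prod) * (l.map g).prod := by rw [hc]
      _ = (f a * g a) * ((l.map f).prod * (l.map g).prod) := by group
      _ = (f a * g a) * (l.map (fun i => f i * g i)).prod := by rw [ih]

end AuxListProd

section Aux

variable {k R : Type*} [Field k] [CommRing R] [Algebra k R] {n : ℕ}
  {σ : Fin n → R ≃ₐ[k] R}

lemma σpow_mul (hc : ∀ i j, σ i * σ j = σ j * σ i) (α β : Fin n → ℤ) :
    σpow σ α * σpow σ β = σpow σ (α + β) := by
  unfold σpow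
  rw [list_prod_map_mul' _ _ (fun i j => Commute.zpow_zpow (hc i j) _ _)]
  congr 1
  apply List.map_congr_left
  intro i _
  rw [Pi.add_apply, zpow_add]

lemma σpow_zero : σpow σ 0 = 1 := by
  unfold σpow
  rw [List.prod_eq_one]
  intro x hx
  obtain ⟨i, _, rfl⟩ := List.mem_map.mp hx
  simp

lemma σpow_single (i : Fin n) : σpow σ (Pi.single i 1) = σ i := by
  unfold σpow
  rw [List.prod_map_eq_pow_single i _ (fun j hj _ => by simp [Pi.single_eq_of_ne hj]),
    List.count_eq_one_of_mem (List.nodup_finRange n) (List.mem_finRange i)]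
  simp

lemma tpow_single {A : Type*} [Monoid A] (t : Fin n → Aˣ) (i : Fin n) (c : ℤ) :
    tpow t (Pi.single i c) = t i ^ c := by
  unfold tpow
  rw [List.prod_map_eq_pow_single i _ (fun j hj _ => by simp [Pi.single_eq_of_ne hj]),
    List.count_eq_one_of_mem (List.nodup_finRange n) (List.mem_finRange i)]
  simp

lemma neg_single {n : ℕ} (i : Fin n) :
    (-Pi.single i 1 : Fin n → ℤ) = Pi.single i (-1 : ℤ) := by
  funext j
  rcases eq_or_ne j i with rfl | hj
  · simp
  · simp [Pi.single_eq_of_ne hj]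

lemma mem_map_algEquiv (e : R ≃ₐ[k] R) (I : Ideal R) (x : R) :
    x ∈ Ideal.map e I ↔ e.symm x ∈ I := by
  rw [Ideal.mem_map_iff_of_surjective e e.surjective]
  constructor
  · rintro ⟨y, hy, rfl⟩; simpa using hy
  · intro h; exact ⟨e.symm x, h, by simp⟩

lemma map_map_algEquiv (e f : R ≃ₐ[k] R) (I : Ideal R) :
    Ideal.map e (Ideal.map f I) = Ideal.map (e * f) I := by
  ext x
  rw [mem_map_algEquiv, mem_map_algEquiv, mem_map_algEquiv]
  have : (e * f).symm x = f.symm (e.symm x) := rfl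
  rw [this]

lemma map_one_algEquiv (I : Ideal R) : Ideal.map (1 : R ≃ₐ[k] R) I = I := by
  ext x; rw [mem_map_algEquiv]; rfl

lemma map_algEquiv_isMaximal (e : R ≃ₐ[k] R) {I : Ideal R} (hI : I.IsMaximal) :
    (Ideal.map e I).IsMaximal := by
  have := hI
  exact Ideal.map_isMaximal_of_equiv e

end Aux

section SkewAux

variable {k R A : Type*} [Field k] [CommRing R] [Algebra k R] [Ring A] [Algebra k A]
  {n : ℕ} {σ : Fin n → R ≃ₐ[k] R} {p : Fin n → Fin n → kˣ}

lemma SkewLaurent.inv_rel (E : SkewLaurent k σ p A) (i : Fin n) (r : R) :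
    (((E.t i)⁻¹ : Aˣ) : A) * E.ι r = E.ι ((σ i)⁻¹ r) * (((E.t i)⁻¹ : Aˣ) : A) := by
  have h2 : ((E.t i : Aˣ) : A) * E.ι ((σ i)⁻¹ r) = E.ι r * ((E.t i : Aˣ) : A) := by
    rw [E.rel_r]
    congr 1
    rw [show ((σ i)⁻¹ : R ≃ₐ[k] R) = (σ i).symm from rfl]
    simp
  rw [Units.inv_mul_eq_iff_eq_mul, ← mul_assoc, h2, mul_assoc, Units.mul_inv, mul_one]

lemma SkewLaurent.zpow_rel (E : SkewLaurent k σ p A) (i : Fin n) (c : ℤ) (r : R) :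
    ((E.t i ^ c : Aˣ) : A) * E.ι r = E.ι ((σ i ^ c) r) * ((E.t i ^ c : Aˣ) : A) := by
  induction c using Int.induction_on generalizing r with
  | zero => simp
  | succ c ih =>
    have hz : (E.t i ^ ((c : ℤ) + 1) : Aˣ) = E.t i ^ (c : ℤ) * E.t i := by
      rw [zpow_add_one]
    rw [hz, Units.val_mul, mul_assoc, E.rel_r, ← mul_assoc, ih (σ i r), mul_assoc,
      ← Units.val_mul, ← hz]
    have hs : (σ i ^ ((c:ℤ)+1)) r = (σ i ^ (c:ℤ)) (σ i r) := by
      rw [zpow_add_one]; rfl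
    rw [hs]
  | pred c ih =>
    have hz : (E.t i ^ (-(c : ℤ) - 1) : Aˣ) = E.t i ^ (-(c : ℤ)) * (E.t i)⁻¹ := by
      rw [zpow_sub_one]
    rw [hz, Units.val_mul, mul_assoc, E.inv_rel, ← mul_assoc, ih ((σ i)⁻¹ r), mul_assoc,
      ← Units.val_mul, ← hz]
    have hs : (σ i ^ (-(c:ℤ)-1)) r = (σ i ^ (-(c:ℤ))) ((σ i)⁻¹ r) := by
      rw [zpow_sub_one]; rfl
    rw [hs]

lemma SkewLaurent.listpow_rel (E : SkewLaurent k σ p A) (α : Fin n → ℤ)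
    (l : List (Fin n)) (r : R) :
    (((l.map fun i => E.t i ^ α i).prod : Aˣ) : A) * E.ι r
      = E.ι (((l.map fun i => σ i ^ α i).prod) r)
        * (((l.map fun i => E.t i ^ α i).prod : Aˣ) : A) := by
  induction l generalizing r with
  | nil => simp
  | cons a l ih =>
    simp only [List.map_cons, List.prod_cons, Units.val_mul]
    rw [mul_assoc, ih, ← mul_assoc, E.zpow_rel, mul_assoc]
    rfl

lemma SkewLaurent.tpow_rel (E : SkewLaurent k σ p A) (α : Fin n → ℤ) (r : R) :
    ((tpow E.t α : Aˣ) : A) * E.ι r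
      = E.ι (σpow σ α r) * ((tpow E.t α : Aˣ) : A) :=
  E.listpow_rel α (List.finRange n) r

end SkewAux

section SegAux

variable {k R : Type*} [Field k] [CommRing R] [Algebra k R] {n : ℕ}
  {σ : Fin n → R ≃ₐ[k] R}

lemma prod_le_absorb {I : Submodule k R}
    (hl : ∀ r x : R, x ∈ I → r * x ∈ I) (hr : ∀ r x : R, x ∈ I → x * r ∈ I)
    {S : Submodule k R} (hS : S ≤ I) (l1 l2 : List (Submodule k R)) :
    (l1 ++ S :: l2).prod ≤ I := by
  rw [List.prod_append, List.prod_cons]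
  have h1 : (I * ⊤ : Submodule k R) ≤ I :=
    Submodule.mul_le.mpr fun x hx y _ => hr y x hx
  have h2 : (⊤ * I : Submodule k R) ≤ I :=
    Submodule.mul_le.mpr fun x _ y hy => hl x y hy
  calc l1.prod * (S * l2.prod) ≤ ⊤ * (I * ⊤) :=
        mul_le_mul' le_top (mul_le_mul' hS le_top)
    _ ≤ ⊤ * I := mul_le_mul' le_rfl h1
    _ ≤ I := h2

lemma segVec_le {H J : Fin n → Submodule k R} {α : Fin n → ℤ} (i : Fin n)
    {I : Submodule k R}
    (hl : ∀ r x : R, x ∈ I → r * x ∈ I) (hr : ∀ r x : R, x ∈ I → x * r ∈ I)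
    (hS : seg (σ i) (H i) (J i) (α i) ≤ I) :
    segVec σ H J α ≤ I := by
  obtain ⟨s, t2, hsplit⟩ := List.append_of_mem (List.mem_finRange i)
  unfold segVec
  rw [hsplit, List.map_append, List.map_cons]
  exact prod_le_absorb hl hr hS _ _

lemma seg_one (σ0 : R ≃ₐ[k] R) (H0 J0 : Submodule k R) : seg σ0 H0 J0 1 = J0 := by
  unfold seg
  rw [if_pos one_pos]
  simp [List.range_succ, List.range_zero, List.flatMap_cons, List.flatMap_nil]
  exact Submodule.map_id J0

lemma seg_neg_one (σ0 : R ≃ₐ[k] R) (H0 J0 : Submodule k R) :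
    seg σ0 H0 J0 (-1) = H0.map (σ0⁻¹ : R ≃ₐ[k] R).toLinearMap := by
  unfold seg
  rw [if_neg (by norm_num), if_neg (by norm_num)]
  simp [List.range_succ, List.range_zero, List.flatMap_cons, List.flatMap_nil]

end SegAux


section BRAux

variable {k R A : Type*} [Field k] [CommRing R] [Algebra k R] [Ring A] [Algebra k A]
  {n : ℕ} {σ : Fin n → R ≃ₐ[k] R} {p : Fin n → Fin n → kˣ}
  {H J : Fin n → Submodule k R}

lemma mem_weightSpace_iff {B : Type*} [Ring B] [Algebra k B] (ιB : R →ₐ[k] B)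
    {M : Type*} [AddCommGroup M] [Module B M] {m : Ideal R} {v : M} :
    v ∈ weightSpace ιB M m ↔ ∀ r ∈ m, ιB r • v = 0 := Iff.rfl

lemma brComponent_form (E : SkewLaurent k σ p A) {α : Fin n → ℤ} {b : A}
    (hb : b ∈ brComponent E H J α) :
    ∃ x ∈ segVec σ H J α, b = E.ι x * ((tpow E.t α : Aˣ) : A) := by
  obtain ⟨a, ha, rfl⟩ := Submodule.mem_map.mp hb
  obtain ⟨x, hx, rfl⟩ := Submodule.mem_map.mp ha
  exact ⟨x, hx, rfl⟩

lemma weight_shift (E : SkewLaurent k σ p A) (B : Subalgebra k A)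
    (ιB : R →ₐ[k] ↥B) (hιB : ∀ r : R, ((ιB r : ↥B) : A) = E.ι r)
    {M : Type*} [AddCommGroup M] [Module ↥B M]
    {α : Fin n → ℤ} {x : R} {b : ↥B}
    (hb : (b : A) = E.ι x * ((tpow E.t α : Aˣ) : A))
    (m : Ideal R) {v : M} (hv : v ∈ weightSpace ιB M m) :
    b • v ∈ weightSpace ιB M (Ideal.map (σpow σ α) m) := by
  rw [mem_weightSpace_iff]
  intro r hr
  obtain ⟨s, hs, rfl⟩ :=
    (Ideal.mem_map_iff_of_surjective (σpow σ α) (σpow σ α).surjective).mp hr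
  have key : ιB (σpow σ α s) * b = b * ιB s := by
    apply Subtype.ext
    show ((ιB (σpow σ α s) * b : ↥B) : A) = ((b * ιB s : ↥B) : A)
    rw [MulMemClass.coe_mul, MulMemClass.coe_mul, hιB, hιB, hb,
      mul_assoc (E.ι x), E.tpow_rel, ← mul_assoc, ← mul_assoc, ← map_mul, ← map_mul,
      mul_comm x (σpow σ α s)]
  rw [← mul_smul, key, mul_smul, hv s hs, smul_zero]

lemma extract (E : SkewLaurent k σ p A) (B : Subalgebra k A)
    (hB : Subalgebra.toSubmodule B = brSubmodule E H J)
    (ιB : R →ₐ[k] ↥B) (hιB : ∀ r : R, ((ιB r : ↥B) : A) = E.ι r)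
    {M : Type*} [AddCommGroup M] [Module ↥B M]
    (hwt : IsWeightModule ιB M)
    (m_v m_w : Ideal R) (hmv : m_v.IsMaximal) (hmw : m_w.IsMaximal)
    (β0 : Fin n → ℤ)
    (hW : ∀ α : Fin n → ℤ, Ideal.map (σpow σ α) m_w = m_v ↔ α = β0)
    {v w : M} (hv : v ∈ weightSpace ιB M m_v)
    (b'' : ↥B) (hvw : v = b'' • w)
    (hw : w ∈ weightSpace ιB M m_w) :
    ∃ c : ↥B, (c : A) ∈ brComponent E H J β0 ∧ v = c • w := by
  classical
  have hbmem : (b'' : A) ∈ brSubmodule E H J := by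
    rw [← hB]; exact b''.2
  rw [brSubmodule, Submodule.mem_iSup_iff_exists_finsupp] at hbmem
  obtain ⟨f, hf, hsum⟩ := hbmem
  have hmemB : ∀ α, f α ∈ B := fun α => by
    have h1 : f α ∈ brSubmodule E H J :=
      le_iSup (fun β => brComponent E H J β) α (hf α)
    rw [← hB] at h1; exact h1
  set c : (Fin n → ℤ) → ↥B := fun α => ⟨f α, hmemB α⟩ with hc
  set s : Finset (Fin n → ℤ) := insert β0 f.support with hs
  have hb'' : b'' = ∑ α ∈ s, c α := by
    apply Subtype.ext
    calc (b'' : A) = ∑ α ∈ f.support, f α := by rw [← hsum]; rfl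
      _ = ∑ α ∈ s, f α := by
          by_cases hβ : β0 ∈ f.support
          · rw [hs, Finset.insert_eq_self.mpr hβ]
          · rw [hs, Finset.sum_insert hβ, Finsupp.notMem_support_iff.mp hβ, zero_add]
      _ = ((∑ α ∈ s, c α : ↥B) : A) := by
          rw [AddSubmonoidClass.coe_finset_sum]
  have hvsum : v = ∑ α ∈ s, (c α) • w := by
    rw [hvw, hb'', Finset.sum_smul]
  -- each term lies in the corresponding weight space
  have hterm : ∀ α, (c α) • w ∈
      weightSpace ιB M (Ideal.map (σpow σ α) m_w) := fun α => by
    obtain ⟨x, _, hform⟩ := brComponent_form E (hf α)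
    exact weight_shift E B ιB hιB (by exact hform) m_w hw
  set M0 : MaximalSpectrum R := ⟨m_v, hmv⟩ with hM0
  have hterm0 : (c β0) • w ∈ weightSpace ιB M m_v := by
    have h1 := hterm β0
    rwa [(hW β0).mpr rfl] at h1
  set u : M := ∑ α ∈ s.erase β0, (c α) • w with hu
  have husum : v = (c β0) • w + u := by
    rw [hvsum, hu]
    exact (Finset.add_sum_erase s _ (Finset.mem_insert_self β0 _)).symm
  have humem : u ∈ ⨆ (m' : MaximalSpectrum R) (_ : m' ≠ M0),
      weightSpace ιB M m'.asIdeal := by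
    apply AddSubgroup.sum_mem
    intro α hα
    have hmax : (Ideal.map (σpow σ α) m_w).IsMaximal :=
      map_algEquiv_isMaximal (σpow σ α) hmw
    set Mα : MaximalSpectrum R := ⟨Ideal.map (σpow σ α) m_w, hmax⟩ with hMα
    have hne : Mα ≠ M0 := by
      intro hcon
      apply (Finset.mem_erase.mp hα).1
      exact (hW α).mp (congrArg MaximalSpectrum.asIdeal hcon)
    exact le_iSup₂ (f := fun (m' : MaximalSpectrum R) (_ : m' ≠ M0) =>
      weightSpace ιB M m'.asIdeal) Mα hne (hterm α)
  have hzero : v - (c β0) • w = 0 := by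
    have h1 : v - (c β0) • w ∈ weightSpace ιB M M0.asIdeal := sub_mem hv hterm0
    have h2 : v - (c β0) • w ∈ ⨆ (m' : MaximalSpectrum R) (_ : m' ≠ M0),
        weightSpace ιB M m'.asIdeal := by
      rw [husum, add_sub_cancel_left]; exact humem
    have h3 := (hwt.2 M0).le_bot (AddSubgroup.mem_inf.mpr ⟨h1, h2⟩)
    exact AddSubgroup.mem_bot.mp h3
  exact ⟨c β0, hf β0, by rw [sub_eq_zero] at hzero; exact hzero⟩

end BRAux

/-- Let `O` be a torsion-free orbit in `Maxspec R` and `𝔪 ∈ O` an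
`i`-break (i.e. `Hᵢ Jᵢ ⊆ σᵢ(𝔪)`).  If `M` is a simple weight `B`-module supported
on `O`, then `B_{eᵢ} M_𝔪 = 0` and `B_{-eᵢ} M_{σᵢ(𝔪)} = 0`. -/
theorem brAlgebra_cross_break
    {k R A : Type*} [Field k] [CommRing R] [Algebra k R] [Ring A] [Algebra k A]
    {n : ℕ} {σ : Fin n → R ≃ₐ[k] R} {p : Fin n → Fin n → kˣ}
    {H J : Fin n → Submodule k R} (hD : IsBRDatum σ p H J)
    (E : SkewLaurent k σ p A) (B : Subalgebra k A)
    (hB : Subalgebra.toSubmodule B = brSubmodule E H J)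
    (ιB : R →ₐ[k] ↥B) (hιB : ∀ r : R, ((ιB r : ↥B) : A) = E.ι r)
    -- a torsion-free orbit `O = ℤⁿ ⬝ 𝔪₀` containing the maximal ideal `𝔪₀`
    (m0 : Ideal R) (hm0 : m0.IsMaximal)
    (htf : ∀ α : Fin n → ℤ, Ideal.map (σpow σ α) m0 = m0 → α = 0)
    -- `𝔪₀` is an `i`-break: `σᵢ(𝔪₀) ∈ css_i(B)`, i.e. `Hᵢ Jᵢ ⊆ σᵢ(𝔪₀)`
    (i : Fin n)
    (hbreak : (H i * J i : Submodule k R) ≤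
      Submodule.restrictScalars k (Ideal.map (σ i) m0))
    -- a simple weight module supported on `O`
    (M : Type*) [AddCommGroup M] [Module ↥B M]
    (hsimple : IsSimpleModule ↥B M)
    (hwt : IsWeightModule ιB M)
    (hsupp : ∀ m' : MaximalSpectrum R, weightSpace ιB M m'.asIdeal ≠ ⊥ →
      ∃ α : Fin n → ℤ, m'.asIdeal = Ideal.map (σpow σ α) m0) :
    -- `B_{eᵢ} M_𝔪 = 0`
    (∀ b : ↥B, (b : A) ∈ brComponent E H J (Pi.single i 1) →
      ∀ v ∈ weightSpace ιB M m0, b • v = 0) ∧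
    -- `B_{-eᵢ} M_{σᵢ(𝔪)} = 0`
    (∀ b : ↥B, (b : A) ∈ brComponent E H J (-Pi.single i 1) →
      ∀ v ∈ weightSpace ιB M (Ideal.map (σ i) m0), b • v = 0) := by
  classical
  -- Bounds on the graded pieces
  have hJle : segVec σ H J (Pi.single i 1) ≤ J i := by
    refine segVec_le i (hD.J_mul_left i) (hD.J_mul_right i) ?_
    rw [show (Pi.single i 1 : Fin n → ℤ) i = 1 from Pi.single_eq_same i 1, seg_one]
  have hHle : segVec σ H J (-Pi.single i 1) ≤
      (H i).map ((σ i)⁻¹ : R ≃ₐ[k] R).toLinearMap := by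
    refine segVec_le i ?_ ?_ ?_
    · intro r x hx
      obtain ⟨h, hh, rfl⟩ := Submodule.mem_map.mp hx
      refine Submodule.mem_map.mpr ⟨σ i r * h, hD.H_mul_left i _ _ hh, ?_⟩
      show ((σ i)⁻¹ : R ≃ₐ[k] R) (σ i r * h) = r * ((σ i)⁻¹ : R ≃ₐ[k] R) h
      rw [map_mul]
      congr 1
      exact (σ i).symm_apply_apply r
    · intro r x hx
      obtain ⟨h, hh, rfl⟩ := Submodule.mem_map.mp hx
      refine Submodule.mem_map.mpr ⟨h * σ i r, hD.H_mul_right i _ _ hh, ?_⟩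
      show ((σ i)⁻¹ : R ≃ₐ[k] R) (h * σ i r) = ((σ i)⁻¹ : R ≃ₐ[k] R) h * r
      rw [map_mul]
      congr 1
      exact (σ i).symm_apply_apply r
    · rw [show ((-Pi.single i 1 : Fin n → ℤ)) i = -1 by simp, seg_neg_one]
  have hmapi : Ideal.map (σ i) m0 = Ideal.map (σpow σ (Pi.single i 1)) m0 := by
    rw [σpow_single]
  have hW1 : ∀ α : Fin n → ℤ,
      Ideal.map (σpow σ α) (Ideal.map (σ i) m0) = m0 ↔ α = -Pi.single i 1 := by
    intro α
    rw [hmapi, map_map_algEquiv, σpow_mul hD.comm]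
    constructor
    · intro hcon
      have h0 := htf _ hcon
      have := add_eq_zero_iff_eq_neg.mp h0
      exact this
    · rintro rfl
      rw [show (-Pi.single i 1 + Pi.single i 1 : Fin n → ℤ) = 0 by simp,
        σpow_zero, map_one_algEquiv]
  have hW2 : ∀ α : Fin n → ℤ,
      Ideal.map (σpow σ α) m0 = Ideal.map (σ i) m0 ↔ α = Pi.single i 1 := by
    intro α
    rw [hmapi]
    constructor
    · intro hcon
      have h2 : Ideal.map (σpow σ (-Pi.single i 1 + α)) m0
          = Ideal.map (σpow σ (-Pi.single i 1 + Pi.single i 1)) m0 := by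
        rw [← σpow_mul hD.comm, ← σpow_mul hD.comm, ← map_map_algEquiv,
          ← map_map_algEquiv, hcon]
      rw [show (-Pi.single i 1 + Pi.single i 1 : Fin n → ℤ) = 0 by simp,
        σpow_zero, map_one_algEquiv] at h2
      have h0 := htf _ h2
      have h3 : (Pi.single i 1 : Fin n → ℤ) = α := neg_add_eq_zero.mp h0
      exact h3.symm
    · rintro rfl
      rfl
  constructor
  · -- B_{e i} M_{m0} = 0
    intro b hb v hv
    by_contra hbv
    obtain ⟨y, hy, hbform⟩ := brComponent_form E hb
    set w := b • v with hwdef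
    have hw : w ∈ weightSpace ιB M (Ideal.map (σ i) m0) := by
      have h1 := weight_shift E B ιB hιB hbform m0 hv
      rwa [σpow_single] at h1
    have hwne : w ≠ 0 := hbv
    have hspan : Submodule.span (↥B) {w} = ⊤ := by
      rcases hsimple.eq_bot_or_eq_top (Submodule.span (↥B) {w}) with hsp | hsp
      · exact absurd (Submodule.span_singleton_eq_bot.mp hsp) hwne
      · exact hsp
    have hvmem : v ∈ Submodule.span (↥B) {w} := by
      rw [hspan]; exact Submodule.mem_top
    obtain ⟨b'', hb''⟩ := Submodule.mem_span_singleton.mp hvmem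
    obtain ⟨c, hcmem, hvcw⟩ := extract E B hB ιB hιB hwt m0 (Ideal.map (σ i) m0)
      hm0 (map_algEquiv_isMaximal (σ i) hm0) (-Pi.single i 1) hW1 hv b'' hb''.symm hw
    obtain ⟨x, hx, hcform⟩ := brComponent_form E hcmem
    obtain ⟨h, hh, hxeq⟩ := Submodule.mem_map.mp (hHle hx)
    have hzm : x * (((σ i)⁻¹ : R ≃ₐ[k] R) y) ∈ m0 := by
      have hhy : h * y ∈ Ideal.map (σ i) m0 :=
        hbreak (Submodule.mul_mem_mul hh (hJle hy))
      have h2 : (σ i).symm (h * y) ∈ m0 := (mem_map_algEquiv (σ i) m0 _).mp hhy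
      have h3 : x * (((σ i)⁻¹ : R ≃ₐ[k] R) y) = (σ i).symm (h * y) := by
        rw [← hxeq]
        show ((σ i)⁻¹ : R ≃ₐ[k] R) h * ((σ i)⁻¹ : R ≃ₐ[k] R) y = (σ i).symm (h * y)
        rw [← map_mul]
        rfl
      rw [h3]
      exact h2
    have hprod : ((c * b : ↥B) : A) = E.ι (x * (((σ i)⁻¹ : R ≃ₐ[k] R) y)) := by
      rw [MulMemClass.coe_mul, hcform, hbform, neg_single,
        tpow_single E.t i (-1), tpow_single E.t i 1, zpow_neg_one, zpow_one]
      calc E.ι x * (((E.t i)⁻¹ : Aˣ) : A) * (E.ι y * ((E.t i : Aˣ) : A))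
          = E.ι x * ((((E.t i)⁻¹ : Aˣ) : A) * E.ι y) * ((E.t i : Aˣ) : A) := by
            group
        _ = E.ι x * (E.ι (((σ i)⁻¹ : R ≃ₐ[k] R) y) * (((E.t i)⁻¹ : Aˣ) : A))
              * ((E.t i : Aˣ) : A) := by rw [E.inv_rel]
        _ = E.ι x * E.ι (((σ i)⁻¹ : R ≃ₐ[k] R) y)
              * ((((E.t i)⁻¹ : Aˣ) : A) * ((E.t i : Aˣ) : A)) := by group
        _ = E.ι (x * (((σ i)⁻¹ : R ≃ₐ[k] R) y)) := by
            rw [Units.inv_mul, mul_one, map_mul]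
    have hcb : c * b = ιB (x * (((σ i)⁻¹ : R ≃ₐ[k] R) y)) := by
      apply Subtype.ext
      rw [hprod, hιB]
    have hv0 : v = 0 := by
      have hstep : v = (c * b) • v := by
        rw [mul_smul, ← hwdef]
        exact hvcw
      rw [hstep, hcb]
      exact (mem_weightSpace_iff ιB).mp hv _ hzm
    exact hbv (by rw [hwdef, hv0, smul_zero])
  · -- B_{-e i} M_{σ_i m0} = 0
    intro b hb v hv
    by_contra hbv
    obtain ⟨x, hx, hbform⟩ := brComponent_form E hb
    set w := b • v with hwdef
    have hw : w ∈ weightSpace ιB M m0 := by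
      have h1 := weight_shift E B ιB hιB hbform (Ideal.map (σ i) m0) hv
      rw [hmapi, map_map_algEquiv, σpow_mul hD.comm,
        show (-Pi.single i 1 + Pi.single i 1 : Fin n → ℤ) = 0 by simp,
        σpow_zero, map_one_algEquiv] at h1
      exact h1
    have hwne : w ≠ 0 := hbv
    have hspan : Submodule.span (↥B) {w} = ⊤ := by
      rcases hsimple.eq_bot_or_eq_top (Submodule.span (↥B) {w}) with hsp | hsp
      · exact absurd (Submodule.span_singleton_eq_bot.mp hsp) hwne
      · exact hsp
    have hvmem : v ∈ Submodule.span (↥B) {w} := by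
      rw [hspan]; exact Submodule.mem_top
    obtain ⟨b'', hb''⟩ := Submodule.mem_span_singleton.mp hvmem
    obtain ⟨c, hcmem, hvcw⟩ := extract E B hB ιB hιB hwt (Ideal.map (σ i) m0) m0
      (map_algEquiv_isMaximal (σ i) hm0) hm0 (Pi.single i 1) hW2 hv b'' hb''.symm hw
    obtain ⟨y, hy, hcform⟩ := brComponent_form E hcmem
    obtain ⟨h, hh, hxeq⟩ := Submodule.mem_map.mp (hHle hx)
    have hσx : σ i x = h := by
      rw [← hxeq]
      show σ i (((σ i)⁻¹ : R ≃ₐ[k] R) h) = h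
      exact (σ i).apply_symm_apply h
    have hzm : y * σ i x ∈ Ideal.map (σ i) m0 := by
      rw [hσx, mul_comm]
      exact hbreak (Submodule.mul_mem_mul hh (hJle hy))
    have hprod : ((c * b : ↥B) : A) = E.ι (y * σ i x) := by
      rw [MulMemClass.coe_mul, hcform, hbform, neg_single,
        tpow_single E.t i (-1), tpow_single E.t i 1, zpow_neg_one, zpow_one]
      calc E.ι y * ((E.t i : Aˣ) : A) * (E.ι x * (((E.t i)⁻¹ : Aˣ) : A))
          = E.ι y * (((E.t i : Aˣ) : A) * E.ι x) * (((E.t i)⁻¹ : Aˣ) : A) := by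
            group
        _ = E.ι y * (E.ι (σ i x) * ((E.t i : Aˣ) : A)) * (((E.t i)⁻¹ : Aˣ) : A) := by
            rw [E.rel_r]
        _ = E.ι y * E.ι (σ i x) * (((E.t i : Aˣ) : A) * (((E.t i)⁻¹ : Aˣ) : A)) := by
            group
        _ = E.ι (y * σ i x) := by rw [Units.mul_inv, mul_one, map_mul]
    have hcb : c * b = ιB (y * σ i x) := by
      apply Subtype.ext
      rw [hprod, hιB]
    have hv0 : v = 0 := by
      have hstep : v = (c * b) • v := by
        rw [mul_smul, ← hwdef]
        exact hvcw
      rw [hstep, hcb]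
      exact (mem_weightSpace_iff ιB).mp hv _ hzm
    exact hbv (by rw [hwdef, hv0, smul_zero])


end BR
end
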